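/- In the single row presentation of a plane perfect matching, every arc α = v_p v_q with 1 < p < q determines exactly one of the two operations: a merge (if v_{p−1} is the ending vertex of a section) or a split (if v_{p−1} is the starting vertex of an arc); merge and split are mutually inverse operations, and each corresponds to exactly one diagonal-flip of the associated triangulation. -/

import Mathlib

/-- Two chords/diagonals `e = (e₁,e₂)` and `f = (f₁,f₂)` (each with first
coordinate < second coordinate) of a convex polygon cross. -/
def Crosses (e f : ℕ × ℕ) : Prop :=
  (e.1 < f.1 ∧ f.1 < e.2 ∧ e.2 < f.2) ∨ (f.1 < e.1 ∧ e.1 < f.2 ∧ f.2 < e.2)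

instance (e f : ℕ × ℕ) : Decidable (Crosses e f) := by unfold Crosses; infer_instance

/-- `e` is a diagonal of the convex `(n+2)`-gon with points `0,…,n+1`
(0-indexed; point `i` stands for `p_{i+1}`), i.e. a chord joining two
non-adjacent points which is not the hull edge `p₁p_{n+2} = (0,n+1)`. -/
def IsDiag (n : ℕ) (e : ℕ × ℕ) : Prop :=
  e.1 + 2 ≤ e.2 ∧ e.2 ≤ n + 1 ∧ ¬(e.1 = 0 ∧ e.2 = n + 1)

/-- A triangulation of the convex `(n+2)`-gon: a maximal (equivalently, of
cardinality `n-1`) set of pairwise non-crossing diagonals. -/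
def IsTriangulation (n : ℕ) (T : Finset (ℕ × ℕ)) : Prop :=
  (∀ e ∈ T, IsDiag n e) ∧ (∀ e ∈ T, ∀ f ∈ T, ¬ Crosses e f) ∧ T.card = n - 1

/-- Outdegree `d_{i+1}` of point `i` (0-indexed) of a triangulation: the number
of diagonals directed out of `i` (each diagonal directed from lower to higher
index), counting the hull edge `p₁p_{n+2}` (at `i = 0`) but no other hull edge. -/
def triOutdeg (T : Finset (ℕ × ℕ)) (i : ℕ) : ℕ :=
  (T.filter (fun e => e.1 = i)).card + (if i = 0 then 1 else 0)

/-- `M` is a plane (non-crossing) perfect matching on the `2n` points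
`0,…,2n-1` (0-indexed; vertex `v` stands for `v_{v+1}`) in convex position,
edges recorded as pairs `(a,b)` with `a < b`. -/
def IsNCMatching (n : ℕ) (M : Finset (ℕ × ℕ)) : Prop :=
  (∀ e ∈ M, e.1 < e.2 ∧ e.2 < 2 * n) ∧
  (∀ e ∈ M, ∀ f ∈ M, ¬ Crosses e f) ∧
  (∀ v < 2 * n, ∃ e ∈ M, e.1 = v ∨ e.2 = v) ∧
  M.card = n

/-- Outdegree `b_{v+1}` of vertex `v` of a matching (each edge directed from
lower to higher index): `1` if `v` is the lower endpoint of its edge, else `0`. -/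
def matchOutdeg (M : Finset (ℕ × ℕ)) (v : ℕ) : ℕ :=
  (M.filter (fun e => e.1 = v)).card

/-- Two triangulations are adjacent in the diagonal-flip graph iff they differ
by exchanging exactly one diagonal. -/
def FlipAdj (n : ℕ) (T T' : Finset (ℕ × ℕ)) : Prop :=
  IsTriangulation n T ∧ IsTriangulation n T' ∧ (T \ T').card = 1 ∧ (T' \ T).card = 1

/-- There is a sequence of `m` diagonal-flips transforming `T` into `T'`. -/
def HasFlipSeq (n : ℕ) : ℕ → Finset (ℕ × ℕ) → Finset (ℕ × ℕ) → Prop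
  | 0, T, T' => T = T'
  | m + 1, T, T' => ∃ S, FlipAdj n T S ∧ HasFlipSeq n m S T'

/-- The flip distance between `T` and `T'` equals `k`. -/
def FlipDist (n : ℕ) (T T' : Finset (ℕ × ℕ)) (k : ℕ) : Prop :=
  HasFlipSeq n k T T' ∧ ∀ m, HasFlipSeq n m T T' → k ≤ m

/-- Number of zeros of the 0/1-sequence `B` strictly before position `m`. -/
def zerosBeforeN (B : ℕ → ℕ) (m : ℕ) : ℕ :=
  ((Finset.range m).filter (fun t => B t = 0)).card

/-- The bijection of AABV2017 on outdegree sequences: `BtoDn n B i` is the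
number of 1s of `B` strictly between the `i`-th and `(i+1)`-st zero (0-indexed;
for `i = 0` the number of 1s before the first zero), i.e. `d_{i+1}`. -/
def BtoDn (n : ℕ) (B : ℕ → ℕ) (i : ℕ) : ℕ :=
  ((Finset.range (2 * n)).filter (fun m => B m = 1 ∧ zerosBeforeN B m = i)).card

/-- The merge, for an arc `α = (p,q)` of the single row presentation, of `α`
with the section `A` ending at `p-1` whose outer arc is `(s, p-1)`: the section
`A` (all arcs with endpoints in `[s, p-1]`) is shifted one vertex to the right
and `α` now starts at `s`. -/
def mergeRes (M : Finset (ℕ × ℕ)) (s p q : ℕ) : Finset (ℕ × ℕ) :=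
  M.image (fun e =>
    if s ≤ e.1 ∧ e.2 ≤ p - 1 then (e.1 + 1, e.2 + 1)
    else if e = (p, q) then (s, q) else e)

/-- The split, for an arc `α = (p,q)`, of the section of `α` from the section
of the arc `β = (p-1, t)`: the section of `α` (all arcs with endpoints in
`[p, q]`) is shifted one vertex to the left and `β` now starts at `q`. -/
def splitRes (M : Finset (ℕ × ℕ)) (p q t : ℕ) : Finset (ℕ × ℕ) :=
  M.image (fun e =>
    if p ≤ e.1 ∧ e.2 ≤ q then (e.1 - 1, e.2 - 1)
    else if e = (p - 1, t) then (q, t) else e)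

/-- The (uniquely determined) triangulations associated, via the outdegree
bijection, with the matchings `M` and `M'` differ by exactly one diagonal-flip. -/
def MatchTriFlip (n : ℕ) (M M' : Finset (ℕ × ℕ)) : Prop :=
  ∀ T T' : Finset (ℕ × ℕ), IsTriangulation n T → IsTriangulation n T' →
    (∀ t < n, triOutdeg T t = BtoDn n (matchOutdeg M) t) →
    (∀ t < n, triOutdeg T' t = BtoDn n (matchOutdeg M') t) →
    FlipAdj n T T'

section Stmt18Aux

lemma crosses_comm {e f : ℕ × ℕ} : Crosses e f ↔ Crosses f e := by
  unfold Crosses; omega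

lemma ncmem {n : ℕ} {M : Finset (ℕ × ℕ)} (hM : IsNCMatching n M) {e : ℕ × ℕ}
    (he : e ∈ M) : e.1 < e.2 ∧ e.2 < 2 * n := hM.1 e he

lemma ncross {n : ℕ} {M : Finset (ℕ × ℕ)} (hM : IsNCMatching n M) {e f : ℕ × ℕ}
    (he : e ∈ M) (hf : f ∈ M) : ¬ Crosses e f := hM.2.1 e he f hf

lemma vertex_unique {n : ℕ} {M : Finset (ℕ × ℕ)} (hM : IsNCMatching n M)
    {e f : ℕ × ℕ} (he : e ∈ M) (hf : f ∈ M) (hne : e ≠ f) :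
    e.1 ≠ f.1 ∧ e.1 ≠ f.2 ∧ e.2 ≠ f.1 ∧ e.2 ≠ f.2 := by
  by_contra hcon
  have hv : ∃ v, (v = e.1 ∨ v = e.2) ∧ (v = f.1 ∨ v = f.2) := by
    by_cases h1 : e.1 = f.1
    · exact ⟨e.1, Or.inl rfl, Or.inl h1⟩
    by_cases h2 : e.1 = f.2
    · exact ⟨e.1, Or.inl rfl, Or.inr h2⟩
    by_cases h3 : e.2 = f.1
    · exact ⟨e.2, Or.inr rfl, Or.inl h3⟩
    by_cases h4 : e.2 = f.2
    · exact ⟨e.2, Or.inr rfl, Or.inr h4⟩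
    exact absurd ⟨h1, h2, h3, h4⟩ hcon
  obtain ⟨v, hve, hvf⟩ := hv
  have hMcard : M.card = n := hM.2.2.2
  have hn1 : 1 ≤ n := by
    have := Finset.card_pos.2 ⟨e, he⟩; omega
  set g : ℕ × ℕ → Finset ℕ := fun a => {a.1, a.2} with hg
  have hgcard : ∀ a : ℕ × ℕ, (g a).card ≤ 2 := by
    intro a
    simp only [hg]
    exact le_trans (Finset.card_insert_le _ _) (by simp)
  have hsub : Finset.range (2 * n) ⊆ M.biUnion g := by
    intro w hw
    rw [Finset.mem_range] at hw
    obtain ⟨a, ha, hcase⟩ := hM.2.2.1 w hw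
    refine Finset.mem_biUnion.2 ⟨a, ha, ?_⟩
    simp only [hg, Finset.mem_insert, Finset.mem_singleton]
    omega
  have hf' : f ∈ M.erase e := Finset.mem_erase.2 ⟨fun h => hne h.symm, hf⟩
  have hvmem1 : v ∈ g e := by
    simp only [hg, Finset.mem_insert, Finset.mem_singleton]; omega
  have hvmem2 : v ∈ (M.erase e).biUnion g := by
    refine Finset.mem_biUnion.2 ⟨f, hf', ?_⟩
    simp only [hg, Finset.mem_insert, Finset.mem_singleton]; omega
  have hcard2 : ((M.erase e).biUnion g).card ≤ 2 * (n - 1) := by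
    calc ((M.erase e).biUnion g).card ≤ ∑ a ∈ M.erase e, (g a).card :=
          Finset.card_biUnion_le
    _ ≤ ∑ _a ∈ M.erase e, 2 := Finset.sum_le_sum (fun a _ => hgcard a)
    _ = 2 * (n - 1) := by
          rw [Finset.sum_const, Finset.card_erase_of_mem he, hMcard, smul_eq_mul]
          ring
  have hbig : (M.biUnion g).card + 1 ≤ 2 + 2 * (n - 1) := by
    rw [(Finset.insert_erase he).symm, Finset.biUnion_insert]
    have hu := Finset.card_union_add_card_inter (g e) ((M.erase e).biUnion g)
    have hint : 1 ≤ ((g e) ∩ ((M.erase e).biUnion g)).card :=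
      Finset.card_pos.2 ⟨v, Finset.mem_inter.2 ⟨hvmem1, hvmem2⟩⟩
    have := hgcard e
    omega
  have h2n : 2 * n ≤ (M.biUnion g).card := by
    have := Finset.card_le_card hsub
    rwa [Finset.card_range] at this
  omega

/-- two arcs sharing a vertex are equal -/
lemma share_eq {n : ℕ} {M : Finset (ℕ × ℕ)} (hM : IsNCMatching n M)
    {e f : ℕ × ℕ} (he : e ∈ M) (hf : f ∈ M)
    (h : e.1 = f.1 ∨ e.1 = f.2 ∨ e.2 = f.1 ∨ e.2 = f.2) : e = f := by
  by_contra hne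
  have := vertex_unique hM he hf hne
  tauto

lemma outdeg_le_one {n : ℕ} {M : Finset (ℕ × ℕ)} (hM : IsNCMatching n M) (v : ℕ) :
    matchOutdeg M v ≤ 1 := by
  unfold matchOutdeg
  refine Finset.card_le_one.2 ?_
  intro a ha b hb
  rw [Finset.mem_filter] at ha hb
  exact share_eq hM ha.1 hb.1 (Or.inl (ha.2.trans hb.2.symm))

lemma outdeg_one_iff {n : ℕ} {M : Finset (ℕ × ℕ)} (hM : IsNCMatching n M) (v : ℕ) :
    matchOutdeg M v = 1 ↔ ∃ b, (v, b) ∈ M := by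
  constructor
  · intro h
    have : (M.filter (fun e => e.1 = v)).Nonempty := by
      rw [← Finset.card_pos]; unfold matchOutdeg at h; omega
    obtain ⟨a, ha⟩ := this
    rw [Finset.mem_filter] at ha
    exact ⟨a.2, by rw [show (v, a.2) = a from by rw [← ha.2]]; exact ha.1⟩
  · intro ⟨b, hb⟩
    have h1 : 1 ≤ matchOutdeg M v := by
      apply Finset.card_pos.2
      exact ⟨(v, b), Finset.mem_filter.2 ⟨hb, rfl⟩⟩
    have := outdeg_le_one hM v
    omega

lemma outdeg_zero_iff {n : ℕ} {M : Finset (ℕ × ℕ)} (hM : IsNCMatching n M) (v : ℕ) :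
    matchOutdeg M v = 0 ↔ ∀ b, (v, b) ∉ M := by
  constructor
  · intro h b hb
    have := (outdeg_one_iff hM v).2 ⟨b, hb⟩; omega
  · intro h
    have hle := outdeg_le_one hM v
    rcases Nat.lt_or_ge (matchOutdeg M v) 1 with h1 | h1
    · omega
    · have := (outdeg_one_iff hM v).1 (by omega)
      obtain ⟨b, hb⟩ := this
      exact absurd hb (h b)

/-- every vertex below 2n is either a left or a right endpoint -/
lemma left_or_right {n : ℕ} {M : Finset (ℕ × ℕ)} (hM : IsNCMatching n M) {v : ℕ}
    (hv : v < 2 * n) : (∃ b, (v, b) ∈ M) ∨ (∃ a, (a, v) ∈ M) := by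
  obtain ⟨e, he, hc⟩ := hM.2.2.1 v hv
  rcases hc with h | h
  · exact Or.inl ⟨e.2, by rw [show (v, e.2) = e from by rw [← h]]; exact he⟩
  · exact Or.inr ⟨e.1, by rw [show (e.1, v) = e from by rw [← h]]; exact he⟩

lemma not_left_and_right {n : ℕ} {M : Finset (ℕ × ℕ)} (hM : IsNCMatching n M)
    {v a b : ℕ} (h1 : (v, b) ∈ M) (h2 : (a, v) ∈ M) : False := by
  have hne : (v, b) ≠ (a, v) := by
    intro h
    have h1' := (ncmem hM h1).1
    simp only [Prod.mk.injEq] at h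
    simp only at h1'
    omega
  exact (vertex_unique hM h1 h2 hne).2.1 rfl

lemma right_zero {n : ℕ} {M : Finset (ℕ × ℕ)} (hM : IsNCMatching n M) {a v : ℕ}
    (h : (a, v) ∈ M) : matchOutdeg M v = 0 :=
  (outdeg_zero_iff hM v).2 (fun b hb => not_left_and_right hM hb h)

lemma left_one {n : ℕ} {M : Finset (ℕ × ℕ)} (hM : IsNCMatching n M) {v b : ℕ}
    (h : (v, b) ∈ M) : matchOutdeg M v = 1 := (outdeg_one_iff hM v).2 ⟨b, h⟩

end Stmt18Aux
section Stmt18Merge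

lemma xor_part {n p q : ℕ} {M : Finset (ℕ × ℕ)} (hM : IsNCMatching n M)
    (hmem : (p, q) ∈ M) :
    Xor' (∃ s, (s, p - 1) ∈ M) (∃ t, (p - 1, t) ∈ M) := by
  have hpn : p - 1 < 2 * n := by have := ncmem hM hmem; omega
  rcases left_or_right hM hpn with ⟨b, hb⟩ | ⟨a, ha⟩
  · exact Or.inr ⟨⟨b, hb⟩, fun ⟨s, hs⟩ => not_left_and_right hM hb hs⟩
  · exact Or.inl ⟨⟨a, ha⟩, fun ⟨t, ht⟩ => not_left_and_right hM ht ha⟩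

/-- the merge map -/
def mmap (s p q : ℕ) (e : ℕ × ℕ) : ℕ × ℕ :=
  if s ≤ e.1 ∧ e.2 ≤ p - 1 then (e.1 + 1, e.2 + 1) else if e = (p, q) then (s, q) else e

lemma mergeRes_eq (M : Finset (ℕ × ℕ)) (s p q : ℕ) :
    mergeRes M s p q = M.image (mmap s p q) := rfl

/-- the split map -/
def smap (p q t : ℕ) (e : ℕ × ℕ) : ℕ × ℕ :=
  if p ≤ e.1 ∧ e.2 ≤ q then (e.1 - 1, e.2 - 1) else if e = (p - 1, t) then (q, t) else e

lemma splitRes_eq (M : Finset (ℕ × ℕ)) (p q t : ℕ) :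
    splitRes M p q t = M.image (smap p q t) := rfl

/-- classification of arcs in a merge configuration -/
lemma mclass {n s pm p q : ℕ} {M : Finset (ℕ × ℕ)} (hM : IsNCMatching n M)
    (hs : (s, pm) ∈ M) (ha : (p, q) ∈ M) (hpp : pm + 1 = p) {e : ℕ × ℕ}
    (he : e ∈ M) :
    (s ≤ e.1 ∧ e.2 ≤ pm) ∨ (e.1 = p ∧ e.2 = q) ∨
    (e.2 < s ∨ q < e.1 ∨ (p < e.1 ∧ e.2 < q) ∨ (e.1 < s ∧ q < e.2)) := by
  have hsp := ncmem hM hs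
  have hpq := ncmem hM ha
  have he2 := ncmem hM he
  have hc1 := ncross hM he hs
  have hc2 := ncross hM he ha
  by_cases hEs : e = (s, pm)
  · exact Or.inl (by rw [hEs]; exact ⟨le_refl _, le_refl _⟩)
  by_cases hEa : e = (p, q)
  · exact Or.inr (Or.inl (by rw [hEa]; exact ⟨rfl, rfl⟩))
  have hS := vertex_unique hM he hs hEs
  have hA := vertex_unique hM he ha hEa
  unfold Crosses at hc1 hc2
  omega

/-- shape of the merge map on each class of arcs -/
lemma fshape {n s pm p q : ℕ} {M : Finset (ℕ × ℕ)} (hM : IsNCMatching n M)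
    (hs : (s, pm) ∈ M) (ha : (p, q) ∈ M) (hpp : pm + 1 = p) {e : ℕ × ℕ}
    (he : e ∈ M) :
    (s ≤ e.1 ∧ e.1 < e.2 ∧ e.2 ≤ pm ∧ mmap s p q e = (e.1 + 1, e.2 + 1)) ∨
    (e.1 = p ∧ e.2 = q ∧ mmap s p q e = (s, q)) ∨
    ((e.1 < e.2 ∧ (e.2 < s ∨ q < e.1 ∨ (p < e.1 ∧ e.2 < q) ∨ (e.1 < s ∧ q < e.2)))
      ∧ mmap s p q e = e) := by
  have hsp := ncmem hM hs
  have hpq := ncmem hM ha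
  have he2 := ncmem hM he
  rcases mclass hM hs ha hpp he with h | h | h
  · left
    refine ⟨h.1, he2.1, h.2, ?_⟩
    unfold mmap
    rw [if_pos ⟨h.1, by omega⟩]
  · right; left
    have hE : e = (p, q) := Prod.ext_iff.2 ⟨h.1, h.2⟩
    refine ⟨h.1, h.2, ?_⟩
    unfold mmap
    rw [if_neg (by omega), if_pos hE]
  · right; right
    refine ⟨⟨he2.1, h⟩, ?_⟩
    have hne : e ≠ (p, q) := by
      intro hE; rw [hE] at h; omega
    unfold mmap
    rw [if_neg (by omega), if_neg hne]

lemma merge_nc {n s pm p q : ℕ} {M : Finset (ℕ × ℕ)} (hM : IsNCMatching n M)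
    (hs : (s, pm) ∈ M) (ha : (p, q) ∈ M) (hpp : pm + 1 = p) :
    IsNCMatching n (mergeRes M s p q) := by
  have hsp := ncmem hM hs
  have hpq := ncmem hM ha
  rw [mergeRes_eq]
  refine ⟨?_, ?_, ?_, ?_⟩
  · -- bounds
    intro e' he'
    obtain ⟨e, he, rfl⟩ := Finset.mem_image.1 he'
    have he2 := ncmem hM he
    rcases fshape hM hs ha hpp he with ⟨h1, h2, h3, hf⟩ | ⟨h1, h2, hf⟩ | ⟨h1, hf⟩ <;>
      rw [hf] <;> omega
  · -- noncrossing
    intro e' he' f' hf'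
    obtain ⟨e, he, rfl⟩ := Finset.mem_image.1 he'
    obtain ⟨f, hf, rfl⟩ := Finset.mem_image.1 hf'
    have hcc := ncross hM he hf
    unfold Crosses at hcc
    rcases fshape hM hs ha hpp he with ⟨h1, h2, h3, hfe⟩ | ⟨h1, h2, hfe⟩ | ⟨h1, hfe⟩ <;>
      rcases fshape hM hs ha hpp hf with ⟨g1, g2, g3, hff⟩ | ⟨g1, g2, hff⟩ | ⟨g1, hff⟩ <;>
      rw [hfe, hff] <;> unfold Crosses <;> omega
  · -- covered
    intro v hv
    by_cases hv1 : s + 1 ≤ v ∧ v ≤ p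
    · obtain ⟨e, he, hce⟩ := hM.2.2.1 (v - 1) (by omega)
      rcases fshape hM hs ha hpp he with ⟨h1, h2, h3, hfe⟩ | ⟨h1, h2, hfe⟩ | ⟨h1, hfe⟩
      · exact ⟨mmap s p q e, Finset.mem_image.2 ⟨e, he, rfl⟩, by rw [hfe]; omega⟩
      · exfalso; omega
      · exfalso; omega
    · by_cases hvs : v = s
      · refine ⟨mmap s p q (p, q), Finset.mem_image.2 ⟨(p, q), ha, rfl⟩, ?_⟩
        rcases fshape hM hs ha hpp ha with ⟨h1, h2, h3, hfe⟩ | ⟨h1, h2, hfe⟩ | ⟨h1, hfe⟩ <;>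
          rw [hfe] <;> omega
      · obtain ⟨e, he, hce⟩ := hM.2.2.1 v hv
        rcases fshape hM hs ha hpp he with ⟨h1, h2, h3, hfe⟩ | ⟨h1, h2, hfe⟩ | ⟨h1, hfe⟩
        · exfalso; omega
        · exact ⟨mmap s p q e, Finset.mem_image.2 ⟨e, he, rfl⟩, by rw [hfe]; omega⟩
        · exact ⟨mmap s p q e, Finset.mem_image.2 ⟨e, he, rfl⟩, by rw [hfe]; omega⟩
  · -- cardinality
    rw [Finset.card_image_of_injOn, hM.2.2.2]
    intro e he f hf h
    simp only [Finset.mem_coe] at he hf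
    have h1 := congrArg Prod.fst h
    have h2 := congrArg Prod.snd h
    rcases fshape hM hs ha hpp he with ⟨a1, a2, a3, hfe⟩ | ⟨a1, a2, hfe⟩ | ⟨a1, hfe⟩ <;>
      rcases fshape hM hs ha hpp hf with ⟨b1, b2, b3, hff⟩ | ⟨b1, b2, hff⟩ | ⟨b1, hff⟩ <;>
      rw [hfe, hff] at h1 h2 <;>
      exact Prod.ext_iff.2 ⟨by omega, by omega⟩

lemma merge_split_inv {n s pm p q : ℕ} {M : Finset (ℕ × ℕ)} (hM : IsNCMatching n M)
    (hs : (s, pm) ∈ M) (ha : (p, q) ∈ M) (hpp : pm + 1 = p) :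
    splitRes (mergeRes M s p q) (s + 1) p q = M := by
  have hsp := ncmem hM hs
  have hpq := ncmem hM ha
  rw [mergeRes_eq, splitRes_eq, Finset.image_image]
  have key : ∀ e ∈ M, (smap (s + 1) p q) (mmap s p q e) = e := by
    intro e he
    have he2 := ncmem hM he
    rcases fshape hM hs ha hpp he with ⟨h1, h2, h3, hfe⟩ | ⟨h1, h2, hfe⟩ | ⟨h1, hfe⟩ <;>
      rw [hfe]
    · unfold smap
      rw [if_pos (by constructor <;> omega)]
      exact Prod.ext_iff.2 ⟨by omega, by omega⟩
    · unfold smap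
      rw [if_neg (by omega), if_pos (by rw [Prod.ext_iff]; constructor <;> omega)]
      exact Prod.ext_iff.2 ⟨by omega, by omega⟩
    · unfold smap
      have hne : e ≠ (s + 1 - 1, q) := by
        intro hE
        have := congrArg Prod.fst hE
        have := congrArg Prod.snd hE
        omega
      rw [if_neg (by omega), if_neg hne]
  calc M.image (fun e => smap (s + 1) p q (mmap s p q e))
      = M.image id := Finset.image_congr (fun e he => key e he)
    _ = M := Finset.image_id

end Stmt18Merge
section Stmt18Split

lemma tgtq {n pm p q t : ℕ} {M : Finset (ℕ × ℕ)} (hM : IsNCMatching n M)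
    (hb : (pm, t) ∈ M) (ha : (p, q) ∈ M) (hpp : pm + 1 = p) : q < t := by
  have hbt := ncmem hM hb
  have hpq := ncmem hM ha
  have hne : (pm, t) ≠ (p, q) := by
    intro h; have := congrArg Prod.fst h; omega
  have hV := vertex_unique hM hb ha hne
  have hc := ncross hM hb ha
  unfold Crosses at hc
  omega

/-- classification of arcs in a split configuration -/
lemma sclass {n pm p q t : ℕ} {M : Finset (ℕ × ℕ)} (hM : IsNCMatching n M)
    (hb : (pm, t) ∈ M) (ha : (p, q) ∈ M) (hpp : pm + 1 = p) {e : ℕ × ℕ}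
    (he : e ∈ M) :
    (p ≤ e.1 ∧ e.2 ≤ q) ∨ (e.1 = pm ∧ e.2 = t) ∨
    (e.2 < pm ∨ t < e.1 ∨ (q < e.1 ∧ e.2 < t) ∨ (e.1 < pm ∧ t < e.2)) := by
  have hqt := tgtq hM hb ha hpp
  have hbt := ncmem hM hb
  have hpq := ncmem hM ha
  have he2 := ncmem hM he
  have hc1 := ncross hM he hb
  have hc2 := ncross hM he ha
  by_cases hEb : e = (pm, t)
  · exact Or.inr (Or.inl (by rw [hEb]; exact ⟨rfl, rfl⟩))
  by_cases hEa : e = (p, q)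
  · exact Or.inl (by rw [hEa]; exact ⟨le_refl _, le_refl _⟩)
  have hB := vertex_unique hM he hb hEb
  have hA := vertex_unique hM he ha hEa
  unfold Crosses at hc1 hc2
  omega

/-- shape of the split map on each class of arcs -/
lemma gshape {n pm p q t : ℕ} {M : Finset (ℕ × ℕ)} (hM : IsNCMatching n M)
    (hb : (pm, t) ∈ M) (ha : (p, q) ∈ M) (hpp : pm + 1 = p) {e : ℕ × ℕ}
    (he : e ∈ M) :
    (p ≤ e.1 ∧ e.1 < e.2 ∧ e.2 ≤ q ∧ smap p q t e = (e.1 - 1, e.2 - 1)) ∨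
    (e.1 = pm ∧ e.2 = t ∧ smap p q t e = (q, t)) ∨
    ((e.1 < e.2 ∧ (e.2 < pm ∨ t < e.1 ∨ (q < e.1 ∧ e.2 < t) ∨ (e.1 < pm ∧ t < e.2)))
      ∧ smap p q t e = e) := by
  have hqt := tgtq hM hb ha hpp
  have hbt := ncmem hM hb
  have hpq := ncmem hM ha
  have he2 := ncmem hM he
  rcases sclass hM hb ha hpp he with h | h | h
  · left
    refine ⟨h.1, he2.1, h.2, ?_⟩
    unfold smap
    rw [if_pos ⟨h.1, h.2⟩]
  · right; left
    refine ⟨h.1, h.2, ?_⟩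
    unfold smap
    rw [if_neg (by omega), if_pos (by rw [Prod.ext_iff]; constructor <;> omega)]
  · right; right
    refine ⟨⟨he2.1, h⟩, ?_⟩
    have hne : e ≠ (p - 1, t) := by
      intro hE
      have := congrArg Prod.fst hE
      have := congrArg Prod.snd hE
      omega
    unfold smap
    rw [if_neg (by omega), if_neg hne]

lemma split_nc {n pm p q t : ℕ} {M : Finset (ℕ × ℕ)} (hM : IsNCMatching n M)
    (hb : (pm, t) ∈ M) (ha : (p, q) ∈ M) (hpp : pm + 1 = p) :
    IsNCMatching n (splitRes M p q t) := by
  have hqt := tgtq hM hb ha hpp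
  have hbt := ncmem hM hb
  have hpq := ncmem hM ha
  rw [splitRes_eq]
  refine ⟨?_, ?_, ?_, ?_⟩
  · intro e' he'
    obtain ⟨e, he, rfl⟩ := Finset.mem_image.1 he'
    have he2 := ncmem hM he
    rcases gshape hM hb ha hpp he with ⟨h1, h2, h3, hf⟩ | ⟨h1, h2, hf⟩ | ⟨h1, hf⟩ <;>
      rw [hf] <;> omega
  · intro e' he' f' hf'
    obtain ⟨e, he, rfl⟩ := Finset.mem_image.1 he'
    obtain ⟨f, hf, rfl⟩ := Finset.mem_image.1 hf'
    have hcc := ncross hM he hf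
    unfold Crosses at hcc
    rcases gshape hM hb ha hpp he with ⟨h1, h2, h3, hfe⟩ | ⟨h1, h2, hfe⟩ | ⟨h1, hfe⟩ <;>
      rcases gshape hM hb ha hpp hf with ⟨g1, g2, g3, hff⟩ | ⟨g1, g2, hff⟩ | ⟨g1, hff⟩ <;>
      rw [hfe, hff] <;> unfold Crosses <;> omega
  · intro v hv
    by_cases hv1 : p - 1 ≤ v ∧ v + 1 ≤ q
    · obtain ⟨e, he, hce⟩ := hM.2.2.1 (v + 1) (by omega)
      rcases gshape hM hb ha hpp he with ⟨h1, h2, h3, hfe⟩ | ⟨h1, h2, hfe⟩ | ⟨h1, hfe⟩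
      · exact ⟨smap p q t e, Finset.mem_image.2 ⟨e, he, rfl⟩, by rw [hfe]; omega⟩
      · exfalso; omega
      · exfalso; omega
    · by_cases hvq : v = q ∨ v = t
      · refine ⟨smap p q t (pm, t), Finset.mem_image.2 ⟨(pm, t), hb, rfl⟩, ?_⟩
        rcases gshape hM hb ha hpp hb with ⟨h1, h2, h3, hfe⟩ | ⟨h1, h2, hfe⟩ | ⟨h1, hfe⟩ <;>
          rw [hfe] <;> omega
      · obtain ⟨e, he, hce⟩ := hM.2.2.1 v hv
        rcases gshape hM hb ha hpp he with ⟨h1, h2, h3, hfe⟩ | ⟨h1, h2, hfe⟩ | ⟨h1, hfe⟩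
        · exfalso; omega
        · exfalso; omega
        · exact ⟨smap p q t e, Finset.mem_image.2 ⟨e, he, rfl⟩, by rw [hfe]; omega⟩
  · rw [Finset.card_image_of_injOn, hM.2.2.2]
    intro e he f hf h
    simp only [Finset.mem_coe] at he hf
    have h1 := congrArg Prod.fst h
    have h2 := congrArg Prod.snd h
    have he2 := ncmem hM he
    have hf2 := ncmem hM hf
    rcases gshape hM hb ha hpp he with ⟨a1, a2, a3, hfe⟩ | ⟨a1, a2, hfe⟩ | ⟨a1, hfe⟩ <;>
      rcases gshape hM hb ha hpp hf with ⟨b1, b2, b3, hff⟩ | ⟨b1, b2, hff⟩ | ⟨b1, hff⟩ <;>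
      rw [hfe, hff] at h1 h2 <;>
      exact Prod.ext_iff.2 ⟨by omega, by omega⟩

lemma split_merge_inv {n pm p q t : ℕ} {M : Finset (ℕ × ℕ)} (hM : IsNCMatching n M)
    (hb : (pm, t) ∈ M) (ha : (p, q) ∈ M) (hpp : pm + 1 = p) :
    mergeRes (splitRes M p q t) (p - 1) q t = M := by
  have hqt := tgtq hM hb ha hpp
  have hbt := ncmem hM hb
  have hpq := ncmem hM ha
  rw [mergeRes_eq, splitRes_eq, Finset.image_image]
  have key : ∀ e ∈ M, (mmap (p - 1) q t) (smap p q t e) = e := by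
    intro e he
    have he2 := ncmem hM he
    rcases gshape hM hb ha hpp he with ⟨h1, h2, h3, hfe⟩ | ⟨h1, h2, hfe⟩ | ⟨h1, hfe⟩ <;>
      rw [hfe]
    · unfold mmap
      rw [if_pos (by constructor <;> omega)]
      exact Prod.ext_iff.2 ⟨by omega, by omega⟩
    · unfold mmap
      rw [if_neg (by omega), if_pos rfl]
      exact Prod.ext_iff.2 ⟨by omega, by omega⟩
    · unfold mmap
      have hne : e ≠ (q, t) := by
        intro hE
        have := congrArg Prod.fst hE
        have := congrArg Prod.snd hE
        omega
      rw [if_neg (by omega), if_neg hne]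
  calc M.image (fun e => mmap (p - 1) q t (smap p q t e))
      = M.image id := Finset.image_congr (fun e he => key e he)
    _ = M := Finset.image_id

end Stmt18Split
section Stmt18Tri

lemma zb_mono (B : ℕ → ℕ) {m m' : ℕ} (h : m ≤ m') :
    zerosBeforeN B m ≤ zerosBeforeN B m' :=
  Finset.card_le_card (Finset.filter_subset_filter _ (Finset.range_subset_range.2 h))

lemma zb_succ (B : ℕ → ℕ) (m : ℕ) :
    zerosBeforeN B (m + 1) = zerosBeforeN B m + (if B m = 0 then 1 else 0) := by
  unfold zerosBeforeN
  rw [Finset.range_add_one, Finset.filter_insert]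
  split
  · rw [Finset.card_insert_of_notMem (by simp)]
  · rfl

lemma zb_congr {B B' : ℕ → ℕ} {m : ℕ} (h : ∀ j < m, B j = B' j) :
    zerosBeforeN B m = zerosBeforeN B' m := by
  unfold zerosBeforeN
  apply congrArg
  apply Finset.filter_congr
  intro j hj
  rw [Finset.mem_range] at hj
  rw [h j hj]

lemma zb_all0 {B : ℕ → ℕ} {m m' : ℕ} (hle : m ≤ m')
    (h : ∀ j, m ≤ j → j < m' → B j = 0) :
    zerosBeforeN B m' = zerosBeforeN B m + (m' - m) := by
  induction m', hle using Nat.le_induction with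
  | base => simp
  | succ m' hle IH =>
    rw [zb_succ, IH (fun j h1 h2 => h j h1 (by omega)), if_pos (h m' hle (by omega))]
    omega

lemma zb_all1 {B : ℕ → ℕ} {m m' : ℕ} (hle : m ≤ m')
    (h : ∀ j, m ≤ j → j < m' → B j = 1) :
    zerosBeforeN B m' = zerosBeforeN B m := by
  induction m', hle using Nat.le_induction with
  | base => rfl
  | succ m' hle IH =>
    rw [zb_succ, IH (fun j h1 h2 => h j h1 (by omega)),
      if_neg (by rw [h m' hle (by omega)]; omega)]
    omega

/-- any noncrossing family of chords (including possibly the long chord) of the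
(n+2)-gon has at most n elements -/
lemma chord_bound : ∀ n : ℕ, ∀ S : Finset (ℕ × ℕ),
    (∀ e ∈ S, e.1 + 2 ≤ e.2 ∧ e.2 ≤ n + 1) →
    (∀ e ∈ S, ∀ f ∈ S, ¬ Crosses e f) → S.card ≤ n := by
  intro n
  induction n using Nat.strong_induction_on with
  | _ n IH =>
    intro S hb hnc
    rcases S.eq_empty_or_nonempty with rfl | hne
    · simp
    obtain ⟨e, he, hemin⟩ := S.exists_min_image (fun e => e.2 - e.1) hne
    have hbe := hb e he
    set g := e.2 - e.1 - 1 with hg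
    have hg1 : 1 ≤ g := by omega
    have havoid : ∀ f ∈ S, (f.1 ≤ e.1 ∨ e.2 ≤ f.1) ∧ (f.2 ≤ e.1 ∨ e.2 ≤ f.2) := by
      intro f hf
      have hbf := hb f hf
      have hc := hnc e he f hf
      have hmin := hemin f hf
      unfold Crosses at hc
      omega
    set r : ℕ → ℕ := fun x => if e.2 ≤ x then x - g else x with hr
    set S' := (S.erase e).image (fun f => (r f.1, r f.2)) with hS'
    have hb' : ∀ f' ∈ S', f'.1 + 2 ≤ f'.2 ∧ f'.2 ≤ (n - g) + 1 := by
      intro f' hf'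
      obtain ⟨f, hf, rfl⟩ := Finset.mem_image.1 hf'
      have hfe : f ≠ e := (Finset.mem_erase.1 hf).1
      have hf' := (Finset.mem_erase.1 hf).2
      have hbf := hb f hf'
      have hav := havoid f hf'
      have hne' : f.1 ≠ e.1 ∨ f.2 ≠ e.2 := by
        by_contra hcc; push_neg at hcc
        exact hfe (Prod.ext_iff.2 ⟨hcc.1, hcc.2⟩)
      simp only [hr]
      constructor <;> [skip; skip] <;> split_ifs <;> omega
    have hnc' : ∀ e' ∈ S', ∀ f' ∈ S', ¬ Crosses e' f' := by
      intro e' he' f' hf'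
      obtain ⟨a, ha, rfl⟩ := Finset.mem_image.1 he'
      obtain ⟨c, hc, rfl⟩ := Finset.mem_image.1 hf'
      have ha' := (Finset.mem_erase.1 ha).2
      have hc' := (Finset.mem_erase.1 hc).2
      have hba := hb a ha'
      have hbc := hb c hc'
      have hava := havoid a ha'
      have havc := havoid c hc'
      have horig := hnc a ha' c hc'
      unfold Crosses at horig ⊢
      simp only [hr]
      split_ifs <;> omega
    have hcard' : S'.card = S.card - 1 := by
      rw [hS', Finset.card_image_of_injOn, Finset.card_erase_of_mem he]
      intro a ha c hc h
      simp only [Finset.mem_coe, Finset.mem_erase] at ha hc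
      have hava := havoid a ha.2
      have havc := havoid c hc.2
      have hba := hb a ha.2
      have hbc := hb c hc.2
      have h1 := congrArg Prod.fst h
      have h2 := congrArg Prod.snd h
      simp only [hr] at h1 h2
      refine Prod.ext_iff.2 ⟨?_, ?_⟩ <;> [skip; skip] <;>
        (revert h1 h2; split_ifs <;> intro h1 h2 <;> omega)
    have hglen : g ≤ n := by omega
    have := IH (n - g) (by omega) S' hb' hnc'
    have hSne := Finset.card_pos.2 hne
    omega

lemma long_nocross {n : ℕ} {e : ℕ × ℕ} (h : e.2 ≤ n + 1) :
    ¬ Crosses (0, n + 1) e ∧ ¬ Crosses e (0, n + 1) := by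
  unfold Crosses; omega

lemma self_nocross (e : ℕ × ℕ) : ¬ Crosses e e := by unfold Crosses; omega

/-- a triangulation is a maximal noncrossing family of diagonals -/
lemma tri_maximal {n : ℕ} {T : Finset (ℕ × ℕ)} (hT : IsTriangulation n T)
    {d : ℕ × ℕ} (hd : IsDiag n d) (hdT : d ∉ T) : ∃ e ∈ T, Crosses d e := by
  by_contra hcon
  push_neg at hcon
  obtain ⟨hd1, hd2, hd3⟩ := hd
  have hn1 : 1 ≤ n := by omega
  have hlne : (0, n + 1) ∉ insert d T := by
    rw [Finset.mem_insert]
    rintro (h | h)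
    · rw [← h] at hd3; exact hd3 ⟨rfl, rfl⟩
    · have := (hT.1 _ h).2.2; exact this ⟨rfl, rfl⟩
  have hcard : (insert (0, n + 1) (insert d T)).card = n + 1 := by
    rw [Finset.card_insert_of_notMem hlne, Finset.card_insert_of_notMem hdT, hT.2.2]
    omega
  have hb : ∀ e ∈ insert (0, n + 1) (insert d T), e.1 + 2 ≤ e.2 ∧ e.2 ≤ n + 1 := by
    intro e he
    rcases Finset.mem_insert.1 he with rfl | he
    · simp; omega
    rcases Finset.mem_insert.1 he with rfl | he
    · exact ⟨hd1, hd2⟩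
    · have := hT.1 e he; exact ⟨this.1, this.2.1⟩
  have hnc : ∀ e ∈ insert (0, n + 1) (insert d T), ∀ f ∈ insert (0, n + 1) (insert d T),
      ¬ Crosses e f := by
    intro e he f hf
    have hbnd : ∀ x ∈ insert (0, n + 1) (insert d T), x.2 ≤ n + 1 := fun x hx => (hb x hx).2
    rcases Finset.mem_insert.1 he with rfl | he'
    · exact (long_nocross (hbnd f hf)).1
    rcases Finset.mem_insert.1 hf with rfl | hf'
    · exact (long_nocross (hbnd e (Finset.mem_insert_of_mem he'))).2
    rcases Finset.mem_insert.1 he' with rfl | he''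
    · rcases Finset.mem_insert.1 hf' with rfl | hf''
      · exact self_nocross _
      · exact hcon f hf''
    · rcases Finset.mem_insert.1 hf' with rfl | hf''
      · exact fun hc => hcon e he'' (crosses_comm.1 hc)
      · exact hT.2.1 e he'' f hf''
  have := chord_bound n _ hb hnc
  omega

/-- the ear lemma: if k is a source and no larger vertex is one, then (k, k+2) is
an ear of the triangulation and k+1 is isolated -/
lemma ear {n k : ℕ} {T : Finset (ℕ × ℕ)} (hT : IsTriangulation n T)
    (hsrc : ∃ y, (k, y) ∈ T) (hno : ∀ x y, k < x → (x, y) ∈ T → False) :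
    (k, k + 2) ∈ T ∧ ∀ e ∈ T, e ≠ (k, k + 2) → e.1 ≠ k + 1 ∧ e.2 ≠ k + 1 := by
  have hear : (k, k + 2) ∈ T := by
    have hFne : (T.filter (fun e => e.1 = k)).Nonempty := by
      obtain ⟨y, hy⟩ := hsrc
      exact ⟨(k, y), Finset.mem_filter.2 ⟨hy, rfl⟩⟩
    obtain ⟨e₀, he₀F, hmin⟩ := (T.filter (fun e => e.1 = k)).exists_min_image
      (fun e => e.2) hFne
    have he₀T := (Finset.mem_filter.1 he₀F).1
    have he₀1 : e₀.1 = k := (Finset.mem_filter.1 he₀F).2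
    obtain ⟨hde1, hde2, hde3⟩ := hT.1 e₀ he₀T
    by_cases hj : e₀.2 = k + 2
    · rw [show (k, k+2) = e₀ from Prod.ext_iff.2 ⟨he₀1.symm, hj.symm⟩]; exact he₀T
    have hd : IsDiag n (k + 1, e₀.2) := by
      refine ⟨by omega, hde2, by omega⟩
    have hdT : (k + 1, e₀.2) ∉ T := fun h => hno (k+1) e₀.2 (by omega) h
    obtain ⟨f, hf, hcr⟩ := tri_maximal hT hd hdT
    exfalso
    have hncf := hT.2.1 e₀ he₀T f hf
    obtain ⟨hfd1, hfd2, hfd3⟩ := hT.1 f hf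
    unfold Crosses at hcr hncf
    by_cases hf1 : f.1 = k
    · have := hmin f (Finset.mem_filter.2 ⟨hf, hf1⟩)
      omega
    · rcases Nat.lt_or_ge k f.1 with h | h
      · exact hno f.1 f.2 h (by rw [show (f.1, f.2) = f from rfl]; exact hf)
      · omega
  refine ⟨hear, ?_⟩
  intro e he hne
  obtain ⟨hde1, hde2, hde3⟩ := hT.1 e he
  have hnc1 := hT.2.1 e he _ hear
  unfold Crosses at hnc1
  constructor
  · intro h1
    exact hno e.1 e.2 (by omega) (by rw [show (e.1, e.2) = e from rfl]; exact he)
  · intro h2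
    have hne' : e.1 ≠ k ∨ e.2 ≠ k + 2 := by
      by_contra hcc; push_neg at hcc
      exact hne (Prod.ext_iff.2 ⟨hcc.1, hcc.2⟩)
    omega

end Stmt18Tri
section Stmt18Peel

/-- vertex relabeling after deleting polygon vertex k+1 -/
def vdel (k x : ℕ) : ℕ := if k + 2 ≤ x then x - 1 else x
/-- vertex relabeling inserting a vertex at position k+1 -/
def vins (k x : ℕ) : ℕ := if k + 1 ≤ x then x + 1 else x
def pmap (r : ℕ → ℕ) (e : ℕ × ℕ) : ℕ × ℕ := (r e.1, r e.2)

lemma peel_tri {n k : ℕ} {T : Finset (ℕ × ℕ)} (hT : IsTriangulation n T) (hn : 2 ≤ n)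
    (hear : (k, k + 2) ∈ T)
    (hiso : ∀ e ∈ T, e ≠ (k, k + 2) → e.1 ≠ k + 1 ∧ e.2 ≠ k + 1) :
    IsTriangulation (n - 1) ((T.erase (k, k + 2)).image (pmap (vdel k))) := by
  obtain ⟨hek, hek2, _⟩ := hT.1 _ hear
  have hdom : ∀ e ∈ T.erase (k, k + 2), e.1 ≠ k + 1 ∧ e.2 ≠ k + 1 := by
    intro e he
    exact hiso e (Finset.mem_erase.1 he).2 (Finset.mem_erase.1 he).1
  refine ⟨?_, ?_, ?_⟩
  · intro e' he'
    obtain ⟨e, he, rfl⟩ := Finset.mem_image.1 he'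
    have hd := hdom e he
    obtain ⟨h1, h2, h3⟩ := hT.1 e (Finset.mem_erase.1 he).2
    have hne : e.1 ≠ k ∨ e.2 ≠ k + 2 := by
      by_contra hcc; push_neg at hcc
      exact (Finset.mem_erase.1 he).1 (Prod.ext_iff.2 ⟨hcc.1, hcc.2⟩)
    have hcr := hT.2.1 e (Finset.mem_erase.1 he).2 _ hear
    unfold Crosses at hcr
    refine ⟨?_, ?_, ?_⟩ <;> simp only [pmap, vdel] <;> [skip; skip; skip]
    · split_ifs <;> omega
    · split_ifs <;> omega
    · split_ifs <;> omega
  · intro e' he' f' hf'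
    obtain ⟨e, he, rfl⟩ := Finset.mem_image.1 he'
    obtain ⟨f, hf, rfl⟩ := Finset.mem_image.1 hf'
    have hde := hdom e he
    have hdf := hdom f hf
    obtain ⟨he1, he2, _⟩ := hT.1 e (Finset.mem_erase.1 he).2
    obtain ⟨hf1, hf2, _⟩ := hT.1 f (Finset.mem_erase.1 hf).2
    have horig := hT.2.1 e (Finset.mem_erase.1 he).2 f (Finset.mem_erase.1 hf).2
    unfold Crosses at horig ⊢
    simp only [pmap, vdel]
    split_ifs <;> omega
  · rw [Finset.card_image_of_injOn, Finset.card_erase_of_mem hear, hT.2.2]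
    intro e he f hf h
    simp only [Finset.mem_coe] at he hf
    have hde := hdom e he
    have hdf := hdom f hf
    have h1 := congrArg Prod.fst h
    have h2 := congrArg Prod.snd h
    simp only [pmap, vdel] at h1 h2
    refine Prod.ext_iff.2 ⟨?_, ?_⟩ <;>
      (revert h1 h2; split_ifs <;> intro h1 h2 <;> omega)

lemma peel_lift {k : ℕ} {S : Finset (ℕ × ℕ)}
    (hdom : ∀ e ∈ S, e.1 ≠ k + 1 ∧ e.2 ≠ k + 1) :
    (S.image (pmap (vdel k))).image (pmap (vins k)) = S := by
  rw [Finset.image_image]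
  have key : ∀ e ∈ S, pmap (vins k) (pmap (vdel k) e) = e := by
    intro e he
    have hd := hdom e he
    refine Prod.ext_iff.2 ⟨?_, ?_⟩ <;> simp only [pmap, vdel, vins] <;>
      split_ifs <;> omega
  calc S.image (fun e => pmap (vins k) (pmap (vdel k) e))
      = S.image id := Finset.image_congr (fun e he => key e he)
    _ = S := Finset.image_id

lemma peel_outdeg {n k : ℕ} {T : Finset (ℕ × ℕ)} (hT : IsTriangulation n T)
    (hear : (k, k + 2) ∈ T)
    (hiso : ∀ e ∈ T, e ≠ (k, k + 2) → e.1 ≠ k + 1 ∧ e.2 ≠ k + 1) (t : ℕ) :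
    triOutdeg ((T.erase (k, k + 2)).image (pmap (vdel k))) t
      = if t < k then triOutdeg T t
        else if t = k then triOutdeg T k - 1 else triOutdeg T (t + 1) := by
  have hdom : ∀ e ∈ T.erase (k, k + 2), e.1 ≠ k + 1 ∧ e.2 ≠ k + 1 := by
    intro e he
    exact hiso e (Finset.mem_erase.1 he).2 (Finset.mem_erase.1 he).1
  have hinj : Set.InjOn (pmap (vdel k)) ((T.erase (k, k + 2)).filter
      (fun e => (pmap (vdel k) e).1 = t)) := by
    intro e he f hf h
    simp only [Finset.coe_filter, Set.mem_setOf_eq] at he hf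
    have hde := hdom e he.1
    have hdf := hdom f hf.1
    have horig := hT.2.1 e (Finset.mem_erase.1 he.1).2 f (Finset.mem_erase.1 hf.1).2
    obtain ⟨he1, he2, _⟩ := hT.1 e (Finset.mem_erase.1 he.1).2
    obtain ⟨hf1, hf2, _⟩ := hT.1 f (Finset.mem_erase.1 hf.1).2
    have h1 := congrArg Prod.fst h
    have h2 := congrArg Prod.snd h
    simp only [pmap, vdel] at h1 h2
    unfold Crosses at horig
    refine Prod.ext_iff.2 ⟨?_, ?_⟩ <;>
      (revert h1 h2; split_ifs <;> intro h1 h2 <;> omega)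
  unfold triOutdeg
  rw [Finset.filter_image, Finset.card_image_of_injOn hinj]
  by_cases h1 : t < k
  · have hfeq : (T.erase (k, k + 2)).filter (fun e => (pmap (vdel k) e).1 = t)
        = T.filter (fun e => e.1 = t) := by
      apply Finset.ext
      intro e
      simp only [Finset.mem_filter, Finset.mem_erase]
      constructor
      · rintro ⟨⟨hne, heT⟩, hv⟩
        have hd := hdom e (Finset.mem_erase.2 ⟨hne, heT⟩)
        simp only [pmap, vdel] at hv
        refine ⟨heT, ?_⟩
        revert hv; split_ifs <;> intro hv <;> omega
      · rintro ⟨heT, hv⟩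
        have hne : e ≠ (k, k + 2) := by
          intro hE; rw [hE] at hv; simp at hv; omega
        refine ⟨⟨hne, heT⟩, ?_⟩
        simp only [pmap, vdel]
        split_ifs <;> omega
    rw [hfeq, if_pos h1]
  by_cases h2 : t = k
  · have hfeq : (T.erase (k, k + 2)).filter (fun e => (pmap (vdel k) e).1 = t)
        = (T.filter (fun e => e.1 = k)).erase (k, k + 2) := by
      apply Finset.ext
      intro e
      simp only [Finset.mem_filter, Finset.mem_erase]
      constructor
      · rintro ⟨⟨hne, heT⟩, hv⟩
        have hd := hdom e (Finset.mem_erase.2 ⟨hne, heT⟩)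
        simp only [pmap, vdel] at hv
        refine ⟨hne, heT, ?_⟩
        revert hv; split_ifs <;> intro hv <;> omega
      · rintro ⟨hne, heT, hv⟩
        have hd := hiso e heT hne
        refine ⟨⟨hne, heT⟩, ?_⟩
        simp only [pmap, vdel]
        split_ifs <;> omega
    have hkmem : (k, k + 2) ∈ T.filter (fun e => e.1 = k) :=
      Finset.mem_filter.2 ⟨hear, rfl⟩
    rw [hfeq, Finset.card_erase_of_mem hkmem]
    have hpos : 0 < (T.filter (fun e => e.1 = k)).card := Finset.card_pos.2 ⟨_, hkmem⟩
    rw [h2]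
    split_ifs <;> omega
  · have h3 : k < t := by omega
    have hfeq : (T.erase (k, k + 2)).filter (fun e => (pmap (vdel k) e).1 = t)
        = T.filter (fun e => e.1 = t + 1) := by
      apply Finset.ext
      intro e
      simp only [Finset.mem_filter, Finset.mem_erase]
      constructor
      · rintro ⟨⟨hne, heT⟩, hv⟩
        have hd := hdom e (Finset.mem_erase.2 ⟨hne, heT⟩)
        simp only [pmap, vdel] at hv
        refine ⟨heT, ?_⟩
        revert hv; split_ifs <;> intro hv <;> omega
      · rintro ⟨heT, hv⟩
        have hne : e ≠ (k, k + 2) := by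
          intro hE; rw [hE] at hv; simp at hv; omega
        refine ⟨⟨hne, heT⟩, ?_⟩
        simp only [pmap, vdel]
        split_ifs <;> omega
    rw [hfeq]
    split_ifs <;> (try exact (by assumption : False).elim) <;> omega

end Stmt18Peel
section Stmt18Red

/-- relabeling of matching positions after removing the arc (a, a+1) -/
def rmap (a : ℕ) (e : ℕ × ℕ) : ℕ × ℕ := pmap (fun x => if a + 2 ≤ x then x - 2 else x) e

def redM (M : Finset (ℕ × ℕ)) (a : ℕ) : Finset (ℕ × ℕ) :=
  (M.erase (a, a + 1)).image (rmap a)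

lemma max_arc {n : ℕ} {M : Finset (ℕ × ℕ)} (hM : IsNCMatching n M) (hn : 1 ≤ n) :
    ∃ a, (a, a + 1) ∈ M ∧ ∀ e ∈ M, e.1 ≤ a := by
  have hne : M.Nonempty := by rw [← Finset.card_pos, hM.2.2.2]; omega
  obtain ⟨e, he, hmax⟩ := M.exists_max_image (fun e => e.1) hne
  have hb := ncmem hM he
  by_cases hb1 : e.2 = e.1 + 1
  · refine ⟨e.1, ?_, hmax⟩
    rw [show (e.1, e.1 + 1) = e from Prod.ext_iff.2 ⟨rfl, hb1.symm⟩]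
    exact he
  · exfalso
    obtain ⟨f, hf, hcf⟩ := hM.2.2.1 (e.1 + 1) (by omega)
    have hmf := hmax f hf
    have hbf := ncmem hM hf
    have hcr := ncross hM hf he
    have hnef : f ≠ e := by
      intro h; rw [h] at hcf; omega
    have hV := vertex_unique hM hf he hnef
    unfold Crosses at hcr
    omega

lemma b_gt {n : ℕ} {M : Finset (ℕ × ℕ)} (hM : IsNCMatching n M) {a : ℕ}
    (hmax : ∀ e ∈ M, e.1 ≤ a) {m : ℕ} (hm : a < m) : matchOutdeg M m = 0 :=
  (outdeg_zero_iff hM m).2 (fun b hb => absurd (hmax _ hb) (by omega))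

lemma red_facts {n a : ℕ} {M : Finset (ℕ × ℕ)} (hM : IsNCMatching n M)
    (haM : (a, a + 1) ∈ M) {e : ℕ × ℕ} (he : e ∈ M.erase (a, a + 1)) :
    e.1 ≠ a ∧ e.1 ≠ a + 1 ∧ e.2 ≠ a ∧ e.2 ≠ a + 1 := by
  have := vertex_unique hM (Finset.mem_erase.1 he).2 haM (Finset.mem_erase.1 he).1
  exact this

lemma red_nc {n a : ℕ} {M : Finset (ℕ × ℕ)} (hM : IsNCMatching n M) (hn : 2 ≤ n)
    (haM : (a, a + 1) ∈ M) (hmax : ∀ e ∈ M, e.1 ≤ a) :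
    IsNCMatching (n - 1) (redM M a) := by
  have hab := ncmem hM haM
  refine ⟨?_, ?_, ?_, ?_⟩
  · intro e' he'
    obtain ⟨e, he, rfl⟩ := Finset.mem_image.1 he'
    have hfs := red_facts hM haM he
    have hbs := ncmem hM (Finset.mem_erase.1 he).2
    have hm1 := hmax e (Finset.mem_erase.1 he).2
    simp only [rmap, pmap]
    constructor <;> split_ifs <;> omega
  · intro e' he' f' hf'
    obtain ⟨e, he, rfl⟩ := Finset.mem_image.1 he'
    obtain ⟨f, hf, rfl⟩ := Finset.mem_image.1 hf'
    have hfse := red_facts hM haM he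
    have hfsf := red_facts hM haM hf
    have hbse := ncmem hM (Finset.mem_erase.1 he).2
    have hbsf := ncmem hM (Finset.mem_erase.1 hf).2
    have horig := ncross hM (Finset.mem_erase.1 he).2 (Finset.mem_erase.1 hf).2
    unfold Crosses at horig ⊢
    simp only [rmap, pmap]
    split_ifs <;> omega
  · intro v hv
    by_cases hva : v < a
    · obtain ⟨f, hf, hcf⟩ := hM.2.2.1 v (by omega)
      have hnef : f ≠ (a, a + 1) := by
        intro h; rw [h] at hcf; omega
      refine ⟨rmap a f, Finset.mem_image.2 ⟨f, Finset.mem_erase.2 ⟨hnef, hf⟩, rfl⟩, ?_⟩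
      have hbf := ncmem hM hf
      simp only [rmap, pmap]
      split_ifs <;> omega
    · obtain ⟨f, hf, hcf⟩ := hM.2.2.1 (v + 2) (by omega)
      have hnef : f ≠ (a, a + 1) := by
        intro h; rw [h] at hcf; omega
      refine ⟨rmap a f, Finset.mem_image.2 ⟨f, Finset.mem_erase.2 ⟨hnef, hf⟩, rfl⟩, ?_⟩
      have hbf := ncmem hM hf
      have hfs := red_facts hM haM (Finset.mem_erase.2 ⟨hnef, hf⟩)
      simp only [rmap, pmap]
      split_ifs <;> omega
  · rw [redM, Finset.card_image_of_injOn, Finset.card_erase_of_mem haM, hM.2.2.2]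
    intro e he f hf h
    simp only [Finset.mem_coe] at he hf
    have hfse := red_facts hM haM he
    have hfsf := red_facts hM haM hf
    have h1 := congrArg Prod.fst h
    have h2 := congrArg Prod.snd h
    simp only [rmap, pmap] at h1 h2
    refine Prod.ext_iff.2 ⟨?_, ?_⟩ <;>
      (revert h1 h2; split_ifs <;> intro h1 h2 <;> omega)

lemma red_outdeg_lt {n a : ℕ} {M : Finset (ℕ × ℕ)} (hM : IsNCMatching n M) (hn : 2 ≤ n)
    (haM : (a, a + 1) ∈ M) (hmax : ∀ e ∈ M, e.1 ≤ a) {m : ℕ} (hm : m < a) :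
    matchOutdeg (redM M a) m = matchOutdeg M m := by
  have hM₁ := red_nc hM hn haM hmax
  rcases Nat.eq_zero_or_pos (matchOutdeg M m) with h0 | h1
  · rw [h0]
    rw [outdeg_zero_iff hM₁]
    intro c hc
    obtain ⟨e, he, hre⟩ := Finset.mem_image.1 hc
    have hfs := red_facts hM haM he
    have h1 := congrArg Prod.fst hre
    simp only [rmap, pmap] at h1
    have hmx := hmax e (Finset.mem_erase.1 he).2
    have he1 : e.1 = m := by revert h1; split_ifs <;> intro h1 <;> omega
    have : matchOutdeg M m = 1 := left_one hM (by
      rw [show (m, e.2) = e from Prod.ext_iff.2 ⟨he1.symm, rfl⟩]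
      exact (Finset.mem_erase.1 he).2)
    omega
  · have h1' : matchOutdeg M m = 1 := by have := outdeg_le_one hM m; omega
    obtain ⟨c, hc⟩ := (outdeg_one_iff hM m).1 h1'
    have hnef : (m, c) ≠ (a, a + 1) := by
      intro h; have := congrArg Prod.fst h; omega
    have hmem : rmap a (m, c) ∈ redM M a :=
      Finset.mem_image.2 ⟨(m, c), Finset.mem_erase.2 ⟨hnef, hc⟩, rfl⟩
    have hfst : (rmap a (m, c)).1 = m := by
      simp only [rmap, pmap]; split_ifs <;> omega
    rw [h1', left_one hM₁ (by
      rw [show (m, (rmap a (m, c)).2) = rmap a (m, c) from Prod.ext_iff.2 ⟨hfst.symm, rfl⟩]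
      exact hmem)]

lemma red_outdeg_ge {n a : ℕ} {M : Finset (ℕ × ℕ)} (hM : IsNCMatching n M) (hn : 2 ≤ n)
    (haM : (a, a + 1) ∈ M) (hmax : ∀ e ∈ M, e.1 ≤ a) {m : ℕ} (hm : a ≤ m) :
    matchOutdeg (redM M a) m = 0 := by
  have hM₁ := red_nc hM hn haM hmax
  rw [outdeg_zero_iff hM₁]
  intro c hc
  obtain ⟨e, he, hre⟩ := Finset.mem_image.1 hc
  have hfs := red_facts hM haM he
  have hmx := hmax e (Finset.mem_erase.1 he).2
  have h1 := congrArg Prod.fst hre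
  simp only [rmap, pmap] at h1
  revert h1; split_ifs <;> intro h1 <;> omega

end Stmt18Red
section Stmt18Count

lemma ones_card {n : ℕ} {M : Finset (ℕ × ℕ)} (hM : IsNCMatching n M) :
    ((Finset.range (2 * n)).filter (fun m => matchOutdeg M m = 1)).card = n := by
  have hset : (Finset.range (2 * n)).filter (fun m => matchOutdeg M m = 1)
      = M.image (fun e => e.1) := by
    ext m
    simp only [Finset.mem_filter, Finset.mem_range, Finset.mem_image]
    constructor
    · rintro ⟨hm, h1⟩
      obtain ⟨b, hb⟩ := (outdeg_one_iff hM m).1 h1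
      exact ⟨(m, b), hb, rfl⟩
    · rintro ⟨e, he, rfl⟩
      have := ncmem hM he
      exact ⟨by omega, left_one hM (by rw [show (e.1, e.2) = e from rfl]; exact he)⟩
  rw [hset, Finset.card_image_of_injOn, hM.2.2.2]
  intro e he f hf h
  simp only [Finset.mem_coe] at he hf
  exact share_eq hM he hf (Or.inl h)

lemma zb_total {n : ℕ} {M : Finset (ℕ × ℕ)} (hM : IsNCMatching n M) :
    zerosBeforeN (matchOutdeg M) (2 * n) = n := by
  have hsplit := Finset.card_filter_add_card_filter_not
    (s := Finset.range (2 * n)) (p := fun m => matchOutdeg M m = 1)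
  have hzz : zerosBeforeN (matchOutdeg M) (2 * n)
      = ((Finset.range (2 * n)).filter (fun m => ¬ matchOutdeg M m = 1)).card := by
    unfold zerosBeforeN
    apply congrArg
    apply Finset.filter_congr
    intro m _
    have := outdeg_le_one hM m
    constructor <;> intro h <;> omega
  rw [hzz]
  have := ones_card hM
  rw [Finset.card_range] at hsplit
  omega

lemma red_btodn {n a : ℕ} {M : Finset (ℕ × ℕ)} (hM : IsNCMatching n M) (hn : 2 ≤ n)
    (haM : (a, a + 1) ∈ M) (hmax : ∀ e ∈ M, e.1 ≤ a) (t : ℕ) :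
    BtoDn (n - 1) (matchOutdeg (redM M a)) t =
      if t < zerosBeforeN (matchOutdeg M) a then BtoDn n (matchOutdeg M) t
      else if t = zerosBeforeN (matchOutdeg M) a then BtoDn n (matchOutdeg M) t - 1
      else 0 := by
  have hab := ncmem hM haM
  have hBlt : ∀ m, m < a → matchOutdeg (redM M a) m = matchOutdeg M m :=
    fun m hm => red_outdeg_lt hM hn haM hmax hm
  have hBge : ∀ m, a ≤ m → matchOutdeg (redM M a) m = 0 :=
    fun m hm => red_outdeg_ge hM hn haM hmax hm
  have hBgt : ∀ m, a < m → matchOutdeg M m = 0 := fun m hm => b_gt hM hmax hm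
  have hBa : matchOutdeg M a = 1 := left_one hM haM
  have hzb : ∀ m, m ≤ a →
      zerosBeforeN (matchOutdeg (redM M a)) m = zerosBeforeN (matchOutdeg M) m :=
    fun m hm => zb_congr (fun j hj => hBlt j (by omega))
  set B := matchOutdeg M with hB
  set B₁ := matchOutdeg (redM M a) with hB₁
  set k := zerosBeforeN B a with hk
  have hA : (Finset.range (2 * (n - 1))).filter
        (fun m => B₁ m = 1 ∧ zerosBeforeN B₁ m = t)
      = (Finset.range (2 * n)).filter
        (fun m => (B m = 1 ∧ zerosBeforeN B m = t) ∧ m < a) := by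
    ext m
    simp only [Finset.mem_filter, Finset.mem_range]
    constructor
    · rintro ⟨hm, h1, h2⟩
      have hma : m < a := by
        by_contra hc
        rw [hBge m (by omega)] at h1
        omega
      rw [hBlt m hma] at h1
      rw [hzb m (by omega)] at h2
      exact ⟨by omega, ⟨h1, h2⟩, hma⟩
    · rintro ⟨hm, ⟨h1, h2⟩, hma⟩
      refine ⟨by omega, ?_, ?_⟩
      · rw [hBlt m hma]; exact h1
      · rw [hzb m (by omega)]; exact h2
  unfold BtoDn
  rw [hA, ← Finset.filter_filter]
  by_cases h1 : t < k
  · rw [if_pos h1]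
    apply congrArg
    apply Finset.filter_eq_self.2
    intro m hm
    simp only [Finset.mem_filter, Finset.mem_range] at hm
    obtain ⟨hmr, hm1, hm2⟩ := hm
    by_contra hc
    push_neg at hc
    rcases Nat.lt_or_ge a m with h | h
    · rw [hBgt m h] at hm1; omega
    · have : m = a := by omega
      rw [this] at hm2
      omega
  by_cases h2 : t = k
  · rw [if_neg h1, if_pos h2]
    have hfull : (Finset.range (2 * n)).filter (fun m => B m = 1 ∧ zerosBeforeN B m = t)
        = insert a (((Finset.range (2 * n)).filter
            (fun m => B m = 1 ∧ zerosBeforeN B m = t)).filter (fun m => m < a)) := by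
      ext m
      simp only [Finset.mem_insert, Finset.mem_filter, Finset.mem_range]
      constructor
      · rintro ⟨hmr, hm1, hm2⟩
        rcases Nat.lt_trichotomy m a with h | h | h
        · exact Or.inr ⟨⟨hmr, hm1, hm2⟩, h⟩
        · exact Or.inl h
        · rw [hBgt m h] at hm1; omega
      · rintro (rfl | ⟨⟨hmr, hm1, hm2⟩, _⟩)
        · exact ⟨by omega, hBa, by omega⟩
        · exact ⟨hmr, hm1, hm2⟩
    have hnotmem : a ∉ ((Finset.range (2 * n)).filter
        (fun m => B m = 1 ∧ zerosBeforeN B m = t)).filter (fun m => m < a) := by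
      simp only [Finset.mem_filter]
      rintro ⟨_, h⟩; omega
    have hcard : ((Finset.range (2 * n)).filter
          (fun m => B m = 1 ∧ zerosBeforeN B m = t)).card
        = (((Finset.range (2 * n)).filter
            (fun m => B m = 1 ∧ zerosBeforeN B m = t)).filter (fun m => m < a)).card + 1 := by
      conv_lhs => rw [hfull]
      rw [Finset.card_insert_of_notMem hnotmem]
    omega
  · rw [if_neg h1, if_neg h2]
    rw [Finset.card_eq_zero]
    apply Finset.eq_empty_of_forall_notMem
    intro m hm
    simp only [Finset.mem_filter, Finset.mem_range] at hm
    obtain ⟨⟨hmr, hm1, hm2⟩, hma⟩ := hm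
    have : zerosBeforeN B m ≤ k := hk ▸ zb_mono B (by omega : m ≤ a)
    omega

end Stmt18Count
section Stmt18Psi

/-- candidate closing positions for the diagonal of an arc `(a,b)`:
zeros after `b` whose partner is `< a`, plus the sentinel `2n` -/
def Pset (n : ℕ) (M : Finset (ℕ × ℕ)) (a b : ℕ) : Finset ℕ :=
  (Finset.range (2 * n + 1)).filter
    (fun c => (b < c ∧ ∃ x ∈ Finset.range a, (x, c) ∈ M) ∨ c = 2 * n)

lemma Pset_ne (n : ℕ) (M : Finset (ℕ × ℕ)) (a b : ℕ) : (Pset n M a b).Nonempty :=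
  ⟨2 * n, by simp [Pset]⟩

def Pmin (n : ℕ) (M : Finset (ℕ × ℕ)) (a b : ℕ) : ℕ :=
  (Pset n M a b).min' (Pset_ne n M a b)

lemma Pset_mem {n : ℕ} {M : Finset (ℕ × ℕ)} {a b c : ℕ} :
    c ∈ Pset n M a b ↔ c ≤ 2 * n ∧ ((b < c ∧ ∃ x, x < a ∧ (x, c) ∈ M) ∨ c = 2 * n) := by
  simp only [Pset, Finset.mem_filter, Finset.mem_range]
  constructor
  · rintro ⟨h1, h2⟩
    exact ⟨by omega, h2⟩
  · rintro ⟨h1, h2⟩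
    exact ⟨by omega, h2⟩

lemma Pmin_eq {n : ℕ} {M : Finset (ℕ × ℕ)} {a b P₀ : ℕ}
    (h1 : P₀ ∈ Pset n M a b) (h2 : ∀ c ∈ Pset n M a b, P₀ ≤ c) :
    Pmin n M a b = P₀ :=
  le_antisymm (Finset.min'_le _ _ h1) (Finset.le_min' _ _ _ h2)

lemma Pmin_spec {n : ℕ} {M : Finset (ℕ × ℕ)} {a b : ℕ} :
    Pmin n M a b ∈ Pset n M a b := Finset.min'_mem _ _

/-- the diagonal (of the (n+2)-gon, as edge of the triangulation together with
the hull edge (0,n+1)) associated to an arc of the matching -/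
def arcDiag (n : ℕ) (M : Finset (ℕ × ℕ)) (e : ℕ × ℕ) : ℕ × ℕ :=
  (zerosBeforeN (matchOutdeg M) e.1,
   zerosBeforeN (matchOutdeg M) (Pmin n M e.1 e.2) + 1)

/-- the last arc maps to the ear -/
lemma arcDiag_ear {n a : ℕ} {M : Finset (ℕ × ℕ)} (hM : IsNCMatching n M)
    (haM : (a, a + 1) ∈ M) (hmax : ∀ e ∈ M, e.1 ≤ a) :
    arcDiag n M (a, a + 1)
      = (zerosBeforeN (matchOutdeg M) a, zerosBeforeN (matchOutdeg M) a + 2) := by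
  have hab := ncmem hM haM
  have hP : Pmin n M a (a + 1) = a + 2 := by
    apply Pmin_eq
    · rw [Pset_mem]
      by_cases hc : a + 2 = 2 * n
      · exact ⟨by omega, Or.inr hc⟩
      · refine ⟨by omega, Or.inl ⟨by omega, ?_⟩⟩
        obtain ⟨f, hf, hcf⟩ := hM.2.2.1 (a + 2) (by omega)
        have hmf := hmax f hf
        have hf2 : f.2 = a + 2 := by omega
        have hnef : f ≠ (a, a + 1) := by
          intro h; rw [h] at hf2; omega
        have hV := vertex_unique hM hf haM hnef
        have hbf := ncmem hM hf
        refine ⟨f.1, by omega, ?_⟩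
        rw [show (f.1, a + 2) = f from Prod.ext_iff.2 ⟨rfl, hf2.symm⟩]
        exact hf
    · intro c hc
      rw [Pset_mem] at hc
      omega
  unfold arcDiag
  rw [hP]
  have h1 : zerosBeforeN (matchOutdeg M) (a + 2)
      = zerosBeforeN (matchOutdeg M) a + 1 := by
    rw [zb_succ, zb_succ, if_neg (by rw [left_one hM haM]; omega),
      if_pos (right_zero hM haM)]
  rw [h1]

/-- the arc-to-diagonal map commutes with removing the last arc -/
lemma arcDiag_red {n a : ℕ} {M : Finset (ℕ × ℕ)} (hM : IsNCMatching n M) (hn : 2 ≤ n)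
    (haM : (a, a + 1) ∈ M) (hmax : ∀ e ∈ M, e.1 ≤ a) {e : ℕ × ℕ}
    (he : e ∈ M.erase (a, a + 1)) :
    arcDiag (n - 1) (redM M a) (rmap a e)
      = pmap (vdel (zerosBeforeN (matchOutdeg M) a)) (arcDiag n M e) := by
  have hab := ncmem hM haM
  have heM := (Finset.mem_erase.1 he).2
  have hfs := red_facts hM haM he
  have hbe := ncmem hM heM
  have he1a : e.1 < a := by
    have := hmax e heM; omega
  have hBlt : ∀ m, m < a → matchOutdeg (redM M a) m = matchOutdeg M m :=
    fun m hm => red_outdeg_lt hM hn haM hmax hm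
  have hBgt : ∀ m, a < m → matchOutdeg M m = 0 := fun m hm => b_gt hM hmax hm
  have hBa : matchOutdeg M a = 1 := left_one hM haM
  have hBa1 : matchOutdeg M (a + 1) = 0 := right_zero hM haM
  have hzb : ∀ m, m ≤ a →
      zerosBeforeN (matchOutdeg (redM M a)) m = zerosBeforeN (matchOutdeg M) m :=
    fun m hm => zb_congr (fun j hj => hBlt j (by omega))
  set k := zerosBeforeN (matchOutdeg M) a with hk
  set P := Pmin n M e.1 e.2 with hP
  have hPmem := Pmin_spec (n := n) (M := M) (a := e.1) (b := e.2)
  rw [← hP] at hPmem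
  rw [Pset_mem] at hPmem
  obtain ⟨hP2n, hPcase⟩ := hPmem
  -- P is not a or a+1
  have hPne : P ≠ a ∧ P ≠ a + 1 := by
    rcases hPcase with ⟨hbP, x, hx, hxP⟩ | hPs
    · constructor
      · intro hE; rw [hE] at hxP
        exact not_left_and_right hM haM hxP
      · intro hE; rw [hE] at hxP
        have : (x, a + 1) = (a, a + 1) := share_eq hM hxP haM (by right; right; right; rfl)
        have := congrArg Prod.fst this
        omega
    · constructor <;> omega
  -- the reduced P value
  have hPred : Pmin (n - 1) (redM M a) (rmap a e).1 (rmap a e).2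
      = (if a + 2 ≤ P then P - 2 else P) := by
    have hre1 : (rmap a e).1 = e.1 := by
      simp only [rmap, pmap]; split_ifs <;> omega
    have hre2 : (rmap a e).2 = (if a + 2 ≤ e.2 then e.2 - 2 else e.2) := rfl
    apply Pmin_eq
    · -- membership
      rw [Pset_mem]
      rcases hPcase with ⟨hbP, x, hx, hxP⟩ | hPs
      · -- genuine qualifier
        have hP2n' : P < 2 * n := (ncmem hM hxP).2
        have hnexP : (x, P) ≠ (a, a + 1) := by
          intro hE; have := congrArg Prod.snd hE; simp only at this; omega
        have hmem : rmap a (x, P) ∈ redM M a :=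
          Finset.mem_image.2 ⟨(x, P), Finset.mem_erase.2 ⟨hnexP, hxP⟩, rfl⟩
        have hrx : (rmap a (x, P)).1 = x := by
          simp only [rmap, pmap]; split_ifs <;> omega
        have hrP : (rmap a (x, P)).2 = (if a + 2 ≤ P then P - 2 else P) := rfl
        refine ⟨by split_ifs <;> omega, Or.inl ⟨?_, x, by omega, ?_⟩⟩
        · rw [hre2]; split_ifs <;> omega
        · rw [← hrx, ← hrP, show ((rmap a (x,P)).1, (rmap a (x,P)).2) = rmap a (x,P) from rfl]
          exact hmem
      · -- sentinel
        refine ⟨by split_ifs <;> omega, Or.inr ?_⟩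
        split_ifs <;> omega
    · -- minimality
      intro c hc
      rw [Pset_mem] at hc
      obtain ⟨hc2n, hccase⟩ := hc
      rcases hccase with ⟨hbc, x', hx', hx'c⟩ | hcs
      · obtain ⟨f, hf, hrf⟩ := Finset.mem_image.1 hx'c
        have hfse := red_facts hM haM hf
        have hfM := (Finset.mem_erase.1 hf).2
        have hbf := ncmem hM hfM
        have hmf := hmax f hfM
        have hrf1 := congrArg Prod.fst hrf
        have hrf2 := congrArg Prod.snd hrf
        simp only [rmap, pmap] at hrf1 hrf2
        have hf1x : f.1 = x' := by revert hrf1; split_ifs <;> intro hrf1 <;> omega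
        -- f.2 is a qualifier for the original
        have hq : f.2 ∈ Pset n M e.1 e.2 := by
          rw [Pset_mem]
          refine ⟨by omega, Or.inl ⟨?_, f.1, by omega, ?_⟩⟩
          · -- f.2 > e.2 from c > (rmap e).2 and monotonicity
            rw [hre2] at hbc
            revert hbc hrf2; split_ifs <;> intro hrf2 hbc <;> omega
          · rw [show (f.1, f.2) = f from rfl]; exact hfM
        have hPle : P ≤ f.2 := by rw [hP]; exact Finset.min'_le _ _ hq
        revert hrf2; split_ifs <;> intro hrf2 <;> omega
      · -- sentinel of the reduced problem
        have : 2 * (n - 1) = 2 * n - 2 := by omega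
        split_ifs <;> omega
  -- now compute both coordinates
  have hfst : (arcDiag (n - 1) (redM M a) (rmap a e)).1
      = (pmap (vdel k) (arcDiag n M e)).1 := by
    simp only [arcDiag, pmap]
    have hre1 : (rmap a e).1 = e.1 := by
      simp only [rmap, pmap]; split_ifs <;> omega
    rw [hre1, hzb e.1 (by omega)]
    have hle : zerosBeforeN (matchOutdeg M) e.1 ≤ k := hk ▸ zb_mono (matchOutdeg M) (by omega : e.1 ≤ a)
    simp only [vdel]
    rw [if_neg (by omega)]
  have hsnd : zerosBeforeN (matchOutdeg (redM M a)) (if a + 2 ≤ P then P - 2 else P) + 1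
      = vdel k (zerosBeforeN (matchOutdeg M) P + 1) := by
    by_cases hcase : a + 2 ≤ P
    · rw [if_pos hcase]
      have hz1 : zerosBeforeN (matchOutdeg M) (a + 2) = k + 1 := by
        rw [zb_succ, zb_succ, if_neg (by rw [hBa]; omega), if_pos hBa1, hk]
      have hz2 : zerosBeforeN (matchOutdeg M) P = k + 1 + (P - (a + 2)) := by
        rw [zb_all0 (by omega : a + 2 ≤ P) (fun j h1 h2 => hBgt j (by omega)), hz1]
      have hz3 : zerosBeforeN (matchOutdeg (redM M a)) (P - 2)
          = k + (P - 2 - a) := by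
        rw [zb_all0 (by omega : a ≤ P - 2)
          (fun j h1 h2 => red_outdeg_ge hM hn haM hmax h1), hzb a (le_refl a), ← hk]
      rw [hz3]
      simp only [vdel]
      rw [if_pos (by omega)]
      omega
    · rw [if_neg hcase]
      have hPa : P < a := by omega
      have hle : zerosBeforeN (matchOutdeg M) P ≤ k := hk ▸ zb_mono (matchOutdeg M) (by omega : P ≤ a)
      rw [hzb P (by omega)]
      simp only [vdel]
      rw [if_neg (by omega)]
  have hsnd' : (arcDiag (n - 1) (redM M a) (rmap a e)).2
      = (pmap (vdel k) (arcDiag n M e)).2 := by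
    simp only [arcDiag, pmap]
    rw [hPred, ← hP]
    exact hsnd
  exact Prod.ext_iff.2 ⟨hfst, hsnd'⟩

end Stmt18Psi
section Stmt18Phi

lemma btodn_zero {n a : ℕ} {M : Finset (ℕ × ℕ)} (hM : IsNCMatching n M)
    (hmax : ∀ e ∈ M, e.1 ≤ a) {t : ℕ} (ht : zerosBeforeN (matchOutdeg M) a < t) :
    BtoDn n (matchOutdeg M) t = 0 := by
  unfold BtoDn
  rw [Finset.card_eq_zero]
  apply Finset.eq_empty_of_forall_notMem
  intro m hm
  simp only [Finset.mem_filter, Finset.mem_range] at hm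
  obtain ⟨hmr, hm1, hm2⟩ := hm
  obtain ⟨b, hb⟩ := (outdeg_one_iff hM m).1 hm1
  have hma : m ≤ a := hmax _ hb
  have := zb_mono (matchOutdeg M) hma
  omega

lemma arcDiag_fst_le {n a : ℕ} {M : Finset (ℕ × ℕ)} {e : ℕ × ℕ} (hea : e.1 ≤ a) :
    (arcDiag n M e).1 ≤ zerosBeforeN (matchOutdeg M) a := zb_mono _ hea

lemma arcDiag_ne_kp1 {n a : ℕ} {M : Finset (ℕ × ℕ)} (hM : IsNCMatching n M)
    (haM : (a, a + 1) ∈ M) (hmax : ∀ e ∈ M, e.1 ≤ a) {e : ℕ × ℕ}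
    (he : e ∈ M.erase (a, a + 1)) :
    (arcDiag n M e).1 ≠ zerosBeforeN (matchOutdeg M) a + 1 ∧
    (arcDiag n M e).2 ≠ zerosBeforeN (matchOutdeg M) a + 1 := by
  have hab := ncmem hM haM
  have heM := (Finset.mem_erase.1 he).2
  have hfs := red_facts hM haM he
  have hbe := ncmem hM heM
  have he1a : e.1 < a := by have := hmax e heM; omega
  set k := zerosBeforeN (matchOutdeg M) a with hk
  constructor
  · have := zb_mono (matchOutdeg M) (le_of_lt he1a)
    simp only [arcDiag]
    omega
  · simp only [arcDiag]
    set P := Pmin n M e.1 e.2 with hP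
    have hPmem := Pmin_spec (n := n) (M := M) (a := e.1) (b := e.2)
    rw [← hP, Pset_mem] at hPmem
    obtain ⟨hP2n, hPcase⟩ := hPmem
    have hk2 : zerosBeforeN (matchOutdeg M) (a + 2)
        = k + 1 := by
      rw [zb_succ, zb_succ, if_neg (by rw [left_one hM haM]; omega),
        if_pos (right_zero hM haM), hk]
    rcases hPcase with ⟨hbP, x, hx, hxP⟩ | hPs
    · have hBP : matchOutdeg M P = 0 := right_zero hM hxP
      have hPna : P ≠ a := by
        intro hE; rw [hE, left_one hM haM] at hBP; omega
      have hPna1 : P ≠ a + 1 := by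
        intro hE; rw [hE] at hxP
        have : (x, a + 1) = (a, a + 1) := share_eq hM hxP haM (by right; right; right; rfl)
        have := congrArg Prod.fst this
        omega
      rcases Nat.lt_or_ge P a with h | h
      · have h1 : zerosBeforeN (matchOutdeg M) (P + 1)
            = zerosBeforeN (matchOutdeg M) P + 1 := by
          rw [zb_succ, if_pos hBP]
        have h2 : zerosBeforeN (matchOutdeg M) (P + 1) ≤ k :=
          hk ▸ zb_mono (matchOutdeg M) (by omega)
        omega
      · have hPa2 : a + 2 ≤ P := by omega
        have := zb_mono (matchOutdeg M) hPa2
        omega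
    · have hzt : zerosBeforeN (matchOutdeg M) (2 * n) = n := zb_total hM
      have h3 := zb_mono (matchOutdeg M) (by omega : a + 2 ≤ 2 * n)
      rw [hPs, hzt]
      omega

theorem phi : ∀ n : ℕ, 1 ≤ n → ∀ M T : Finset (ℕ × ℕ), IsNCMatching n M →
    IsTriangulation n T →
    (∀ t < n, triOutdeg T t = BtoDn n (matchOutdeg M) t) →
    insert (0, n + 1) T = M.image (arcDiag n M) := by
  intro n
  induction n using Nat.strong_induction_on with
  | _ n IH =>
    intro hn M T hM hT hd
    by_cases hn2 : 2 ≤ n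
    swap
    · -- base case n = 1
      have hn1 : n = 1 := by omega
      subst hn1
      have hTe : T = ∅ := by
        rw [← Finset.card_eq_zero, hT.2.2]
      obtain ⟨e, he, hce⟩ := hM.2.2.1 0 (by omega)
      have hbe := ncmem hM he
      have he01 : e = (0, 1) := Prod.ext_iff.2 ⟨by omega, by omega⟩
      rw [he01] at he
      have hMs : M = {(0, 1)} := by
        obtain ⟨y, hy⟩ := Finset.card_eq_one.1 (hM.2.2.2)
        rw [hy]
        rw [hy, Finset.mem_singleton] at he
        rw [he]
      have hPv : Pmin 1 M 0 1 = 2 := by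
        apply Pmin_eq
        · rw [Pset_mem]; exact ⟨by omega, Or.inr rfl⟩
        · intro c hc
          rw [Pset_mem] at hc
          rcases hc.2 with ⟨_, x, hx, _⟩ | h
          · omega
          · omega
      have hψ : arcDiag 1 M (0, 1) = (0, 2) := by
        simp only [arcDiag]
        rw [hPv]
        have h0 : zerosBeforeN (matchOutdeg M) 0 = 0 := by
          simp [zerosBeforeN]
        have h2 : zerosBeforeN (matchOutdeg M) 2 = 1 := by
          rw [zb_succ, zb_succ, h0, if_neg (by rw [left_one hM he]; omega),
            if_pos (right_zero hM he)]
        rw [h2]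
        exact Prod.ext_iff.2 ⟨h0, rfl⟩
      rw [hMs] at hψ
      rw [hTe, hMs, Finset.image_singleton, hψ]
      rfl
    · -- inductive step
      obtain ⟨a, haM, hmax⟩ := max_arc hM (by omega)
      have hab := ncmem hM haM
      set k := zerosBeforeN (matchOutdeg M) a with hk
      have hBa : matchOutdeg M a = 1 := left_one hM haM
      have hkn : k + 1 ≤ n := by
        have h1 : zerosBeforeN (matchOutdeg M) (a + 2) = k + 1 := by
          rw [zb_succ, zb_succ, if_neg (by rw [hBa]; omega),
            if_pos (right_zero hM haM), hk]
        have h2 := zb_mono (matchOutdeg M) (by omega : a + 2 ≤ 2 * n)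
        rw [zb_total hM] at h2
        omega
      have hamem : a ∈ (Finset.range (2 * n)).filter
          (fun m => matchOutdeg M m = 1 ∧ zerosBeforeN (matchOutdeg M) m = k) :=
        Finset.mem_filter.2 ⟨Finset.mem_range.2 (by omega), hBa, hk.symm⟩
      have hBk1 : 1 ≤ BtoDn n (matchOutdeg M) k := by
        unfold BtoDn
        exact Finset.card_pos.2 ⟨a, hamem⟩
      -- if k = 0 then BtoDn at 0 is at least 2
      have hBk0 : k = 0 → 2 ≤ BtoDn n (matchOutdeg M) 0 := by
        intro hk0
        have ha1 : 1 ≤ a := by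
          by_contra hc
          have ha0 : a = 0 := by omega
          obtain ⟨f, hf, hcf⟩ := hM.2.2.1 2 (by omega)
          have := hmax f hf
          have hbf := ncmem hM hf
          have hf2 : f.2 = 2 := by omega
          have hne : f ≠ (a, a + 1) := by
            intro h; rw [h] at hf2; omega
          have hV := vertex_unique hM hf haM hne
          omega
        have h0mem : 0 ∈ (Finset.range (2 * n)).filter
            (fun m => matchOutdeg M m = 1 ∧ zerosBeforeN (matchOutdeg M) m = 0) := by
          simp only [Finset.mem_filter, Finset.mem_range]
          refine ⟨by omega, ?_, by simp [zerosBeforeN]⟩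
          -- B 0 = 1 since no zeros before a
          have : matchOutdeg M 0 ≠ 0 := by
            intro hc
            have : 0 ∈ (Finset.range a).filter (fun t => matchOutdeg M t = 0) := by
              simp only [Finset.mem_filter, Finset.mem_range]
              exact ⟨by omega, hc⟩
            have hcard := Finset.card_pos.2 ⟨0, this⟩
            have : zerosBeforeN (matchOutdeg M) a = 0 := by rw [← hk, hk0]
            unfold zerosBeforeN at this
            omega
          have := outdeg_le_one hM 0
          omega
        rw [hk0] at hamem
        unfold BtoDn
        exact Finset.one_lt_card.2 ⟨0, h0mem, a, hamem, by omega⟩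
      -- sources of T above k are empty
      have hno : ∀ x y, k < x → (x, y) ∈ T → False := by
        intro x y hkx hxy
        obtain ⟨hdg1, hdg2, _⟩ := hT.1 _ hxy
        have hxn : x < n := by omega
        have hdx := hd x hxn
        rw [btodn_zero hM hmax (by omega)] at hdx
        have hmem : (x, y) ∈ T.filter (fun e => e.1 = x) :=
          Finset.mem_filter.2 ⟨hxy, rfl⟩
        have := Finset.card_pos.2 ⟨(x, y), hmem⟩
        unfold triOutdeg at hdx
        omega
      have hsrc : ∃ y, (k, y) ∈ T := by
        have hdk := hd k (by omega)
        have hcpos : 0 < (T.filter (fun e => e.1 = k)).card := by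
          unfold triOutdeg at hdk
          by_cases hk0 : k = 0
          · have h2 := hBk0 hk0
            rw [← hk0] at h2
            rw [if_pos hk0] at hdk
            omega
          · rw [if_neg hk0] at hdk
            omega
        obtain ⟨e₀, he₀⟩ := Finset.card_pos.1 hcpos
        rw [Finset.mem_filter] at he₀
        refine ⟨e₀.2, ?_⟩
        rw [show (k, e₀.2) = e₀ from Prod.ext_iff.2 ⟨he₀.2.symm, rfl⟩]
        exact he₀.1
      obtain ⟨hear, hiso⟩ := ear hT hsrc hno
      -- apply the induction hypothesis
      have hM₁ := red_nc hM hn2 haM hmax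
      have hT₁ := peel_tri hT hn2 hear hiso
      have hd₁ : ∀ t < n - 1, triOutdeg ((T.erase (k, k + 2)).image (pmap (vdel k))) t
          = BtoDn (n - 1) (matchOutdeg (redM M a)) t := by
        intro t ht
        rw [peel_outdeg hT hear hiso, red_btodn hM hn2 haM hmax, ← hk]
        by_cases h1 : t < k
        · rw [if_pos h1, if_pos h1, hd t (by omega)]
        by_cases h2 : t = k
        · rw [if_neg h1, if_neg h1, if_pos h2, if_pos h2, hd k (by omega), h2]
        · rw [if_neg h1, if_neg h1, if_neg h2, if_neg h2, hd (t + 1) (by omega)]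
          exact btodn_zero hM hmax (by omega)
      have hIH := IH (n - 1) (by omega) (by omega : 1 ≤ n - 1) (redM M a)
        ((T.erase (k, k + 2)).image (pmap (vdel k))) hM₁ hT₁ hd₁
      -- lift the statement back
      have hrw : n - 1 + 1 = n := by omega
      rw [hrw] at hIH
      have hRHS : (redM M a).image (arcDiag (n - 1) (redM M a))
          = ((M.erase (a, a + 1)).image (arcDiag n M)).image (pmap (vdel k)) := by
        rw [redM, Finset.image_image, Finset.image_image]
        apply Finset.image_congr
        intro e he
        simp only [Function.comp_apply]
        exact hk ▸ arcDiag_red hM hn2 haM hmax he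
      rw [hRHS] at hIH
      -- apply vins to both sides
      have happ := congrArg (fun S => S.image (pmap (vins k))) hIH
      rw [Finset.image_insert] at happ
      have hvl : pmap (vins k) (0, n) = (0, n + 1) := by
        simp only [pmap, vins]
        rw [if_neg (by omega), if_pos (by omega)]
      have hdomT : ∀ e ∈ T.erase (k, k + 2), e.1 ≠ k + 1 ∧ e.2 ≠ k + 1 := fun e he =>
        hiso e (Finset.mem_erase.1 he).2 (Finset.mem_erase.1 he).1
      have hliftT := peel_lift hdomT
      have hdomψ : ∀ e' ∈ (M.erase (a, a + 1)).image (arcDiag n M),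
          e'.1 ≠ k + 1 ∧ e'.2 ≠ k + 1 := by
        intro e' he'
        obtain ⟨e, he, rfl⟩ := Finset.mem_image.1 he'
        exact hk ▸ arcDiag_ne_kp1 hM haM hmax he
      have hliftψ := peel_lift hdomψ
      rw [hvl, hliftT, hliftψ] at happ
      -- now assemble
      have hMini : M.image (arcDiag n M)
          = insert (arcDiag n M (a, a + 1)) ((M.erase (a, a + 1)).image (arcDiag n M)) := by
        nth_rewrite 2 [← Finset.insert_erase haM]
        rw [Finset.image_insert]
      rw [hMini, arcDiag_ear hM haM hmax, ← hk, ← happ]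
      rw [Finset.insert_comm, Finset.insert_erase hear]
  
end Stmt18Phi
section Stmt18MergeCmp

lemma mem_merge' {n s pm p q : ℕ} {M : Finset (ℕ × ℕ)} (hM : IsNCMatching n M)
    (hs : (s, pm) ∈ M) (ha : (p, q) ∈ M) (hpp : pm + 1 = p) {x c : ℕ} :
    (x, c) ∈ mergeRes M s p q ↔
      ((x, c) = (s, q) ∨
       (s + 1 ≤ x ∧ c ≤ p ∧ (x - 1, c - 1) ∈ M ∧ s ≤ x - 1 ∧ c - 1 ≤ pm) ∨
       ((x, c) ∈ M ∧ (c < s ∨ q < x ∨ (p < x ∧ c < q) ∨ (x < s ∧ q < c)))) := by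
  have hsp := ncmem hM hs
  have hpq := ncmem hM ha
  rw [mergeRes_eq]
  constructor
  · intro hmem
    obtain ⟨e, he, hre⟩ := Finset.mem_image.1 hmem
    have h1 := congrArg Prod.fst hre
    have h2 := congrArg Prod.snd hre
    rcases fshape hM hs ha hpp he with ⟨a1, a2, a3, hfe⟩ | ⟨a1, a2, hfe⟩ | ⟨a1, hfe⟩ <;>
      rw [hfe] at h1 h2
    · right; left
      refine ⟨by omega, by omega, ?_, by omega, by omega⟩
      rw [show (x - 1, c - 1) = e from Prod.ext_iff.2 ⟨by omega, by omega⟩]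
      exact he
    · left; exact Prod.ext_iff.2 ⟨by omega, by omega⟩
    · right; right
      constructor
      · rw [show (x, c) = e from Prod.ext_iff.2 ⟨by omega, by omega⟩]
        exact he
      · obtain ⟨h3, h4⟩ := a1
        omega
  · rintro (hE | ⟨h1, h2, hmem, h3, h4⟩ | ⟨hmem, hfar⟩)
    · refine Finset.mem_image.2 ⟨(p, q), ha, ?_⟩
      unfold mmap
      rw [if_neg (by omega), if_pos rfl, hE]
    · refine Finset.mem_image.2 ⟨(x - 1, c - 1), hmem, ?_⟩
      have := ncmem hM hmem
      unfold mmap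
      rw [if_pos (by constructor <;> omega)]
      exact Prod.ext_iff.2 ⟨by omega, by omega⟩
    · refine Finset.mem_image.2 ⟨(x, c), hmem, ?_⟩
      have := ncmem hM hmem
      have hne : (x, c) ≠ (p, q) := by
        intro hE
        have h5 := congrArg Prod.fst hE
        have h6 := congrArg Prod.snd hE
        omega
      unfold mmap
      rw [if_neg (by omega), if_neg hne]

lemma merge_B {n s pm p q : ℕ} {M : Finset (ℕ × ℕ)} (hM : IsNCMatching n M)
    (hs : (s, pm) ∈ M) (ha : (p, q) ∈ M) (hpp : pm + 1 = p) (v : ℕ) :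
    matchOutdeg (mergeRes M s p q) v =
      if v ≤ s ∨ p < v then matchOutdeg M v else matchOutdeg M (v - 1) := by
  have hsp := ncmem hM hs
  have hpq := ncmem hM ha
  have hM' := merge_nc hM hs ha hpp
  by_cases hv : v ≤ s ∨ p < v
  · rw [if_pos hv]
    by_cases hvs : v = s
    · rw [hvs, left_one hM hs, left_one hM' ((mem_merge' hM hs ha hpp).2 (Or.inl rfl))]
    rcases hv with hv | hv
    · -- v < s
      have hvlt : v < s := by omega
      rcases Nat.eq_zero_or_pos (matchOutdeg M v) with h0 | hpos
      · rw [h0, outdeg_zero_iff hM']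
        intro c hc
        rcases (mem_merge' hM hs ha hpp).1 hc with hE | ⟨h1, h2, hm2, h3, h4⟩ | ⟨hmem, _⟩
        · have := congrArg Prod.fst hE; omega
        · omega
        · exact absurd (left_one hM hmem) (by omega)
      · have h1 : matchOutdeg M v = 1 := by have := outdeg_le_one hM v; omega
        obtain ⟨c, hc⟩ := (outdeg_one_iff hM v).1 h1
        have hbc := ncmem hM hc
        rcases mclass hM hs ha hpp hc with hcl | hcl | hcl
        · omega
        · omega
        · rw [h1, left_one hM' ((mem_merge' hM hs ha hpp).2 (Or.inr (Or.inr ⟨hc, by omega⟩)))]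
    · -- p < v
      rcases Nat.eq_zero_or_pos (matchOutdeg M v) with h0 | hpos
      · rw [h0, outdeg_zero_iff hM']
        intro c hc
        rcases (mem_merge' hM hs ha hpp).1 hc with hE | ⟨h1, h2, hm2, h3, h4⟩ | ⟨hmem, _⟩
        · have := congrArg Prod.fst hE; omega
        · have := ncmem hM hm2; omega
        · exact absurd (left_one hM hmem) (by omega)
      · have h1 : matchOutdeg M v = 1 := by have := outdeg_le_one hM v; omega
        obtain ⟨c, hc⟩ := (outdeg_one_iff hM v).1 h1
        have hbc := ncmem hM hc
        rcases mclass hM hs ha hpp hc with hcl | hcl | hcl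
        · omega
        · -- (v, c) = (p, q): v = p contradiction with p < v
          omega
        · rw [h1, left_one hM' ((mem_merge' hM hs ha hpp).2 (Or.inr (Or.inr ⟨hc, by omega⟩)))]
  · rw [if_neg hv]
    push_neg at hv
    obtain ⟨hv1, hv2⟩ := hv
    rcases Nat.eq_zero_or_pos (matchOutdeg M (v - 1)) with h0 | hpos
    · rw [h0, outdeg_zero_iff hM']
      intro c hc
      rcases (mem_merge' hM hs ha hpp).1 hc with hE | ⟨h1, h2, hmem, h3, h4⟩ | ⟨hmem, hfar⟩
      · have := congrArg Prod.fst hE; omega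
      · exact absurd (left_one hM hmem) (by omega)
      · have := ncmem hM hmem
        omega
    · have h1 : matchOutdeg M (v - 1) = 1 := by have := outdeg_le_one hM (v - 1); omega
      obtain ⟨c, hc⟩ := (outdeg_one_iff hM (v - 1)).1 h1
      have hbc := ncmem hM hc
      rcases mclass hM hs ha hpp hc with hcl | hcl | hcl
      · have hmem' : (v, c + 1) ∈ mergeRes M s p q := by
          refine (mem_merge' hM hs ha hpp).2 (Or.inr (Or.inl
            ⟨by omega, by omega, ?_, by omega, by omega⟩))
          rw [show (v - 1, c + 1 - 1) = (v - 1, c) from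
            Prod.ext_iff.2 ⟨rfl, by omega⟩]
          exact hc
        rw [h1, left_one hM' hmem']
      · -- (v-1, c) = (p, q): v - 1 = p but v ≤ p
        omega
      · -- far class with v - 1 ∈ [s, p-1]: impossible
        omega

lemma merge_zb_le {n s pm p q : ℕ} {M : Finset (ℕ × ℕ)} (hM : IsNCMatching n M)
    (hs : (s, pm) ∈ M) (ha : (p, q) ∈ M) (hpp : pm + 1 = p) {m : ℕ} (hm : m ≤ s) :
    zerosBeforeN (matchOutdeg (mergeRes M s p q)) m
      = zerosBeforeN (matchOutdeg M) m := by
  apply zb_congr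
  intro j hj
  rw [merge_B hM hs ha hpp, if_pos (by omega)]

lemma merge_zb_mid {n s pm p q : ℕ} {M : Finset (ℕ × ℕ)} (hM : IsNCMatching n M)
    (hs : (s, pm) ∈ M) (ha : (p, q) ∈ M) (hpp : pm + 1 = p) {m : ℕ}
    (hm1 : s + 1 ≤ m) (hm2 : m ≤ p + 1) :
    zerosBeforeN (matchOutdeg (mergeRes M s p q)) m
      = zerosBeforeN (matchOutdeg M) (m - 1) := by
  induction m, hm1 using Nat.le_induction with
  | base =>
    have h1 := zb_succ (matchOutdeg (mergeRes M s p q)) s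
    have h3 : matchOutdeg (mergeRes M s p q) s = 1 := by
      rw [merge_B hM hs ha hpp, if_pos (by omega)]
      exact left_one hM hs
    rw [h3] at h1
    rw [h1, merge_zb_le hM hs ha hpp (le_refl s), show s + 1 - 1 = s from rfl,
      if_neg (by omega : ¬ (1 : ℕ) = 0)]
    omega
  | succ m hle IH =>
    have h1 := zb_succ (matchOutdeg (mergeRes M s p q)) m
    have h2 : zerosBeforeN (matchOutdeg M) m
        = zerosBeforeN (matchOutdeg M) (m - 1)
          + (if matchOutdeg M (m - 1) = 0 then 1 else 0) := by
      have h3 := zb_succ (matchOutdeg M) (m - 1)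
      rw [show m - 1 + 1 = m from by omega] at h3
      exact h3
    have h3 : matchOutdeg (mergeRes M s p q) m = matchOutdeg M (m - 1) := by
      rw [merge_B hM hs ha hpp, if_neg (by omega)]
    rw [h3] at h1
    rw [h1, IH (by omega), show m + 1 - 1 = m from rfl, h2]

lemma merge_zb_ge {n s pm p q : ℕ} {M : Finset (ℕ × ℕ)} (hM : IsNCMatching n M)
    (hs : (s, pm) ∈ M) (ha : (p, q) ∈ M) (hpp : pm + 1 = p) {m : ℕ}
    (hm : p + 1 ≤ m) :
    zerosBeforeN (matchOutdeg (mergeRes M s p q)) m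
      = zerosBeforeN (matchOutdeg M) m := by
  have hsp := ncmem hM hs
  induction m, hm using Nat.le_induction with
  | base =>
    rw [merge_zb_mid hM hs ha hpp (by omega) (by omega),
      show p + 1 - 1 = p from rfl]
    have h1 := zb_succ (matchOutdeg M) p
    rw [left_one hM ha, if_neg (by omega : ¬ (1 : ℕ) = 0)] at h1
    rw [h1]
    omega
  | succ m hle IH =>
    have h1 := zb_succ (matchOutdeg (mergeRes M s p q)) m
    have h2 := zb_succ (matchOutdeg M) m
    have h3 : matchOutdeg (mergeRes M s p q) m = matchOutdeg M m := by
      rw [merge_B hM hs ha hpp, if_pos (by omega)]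
    rw [h3] at h1
    rw [h1, h2, IH]

end Stmt18MergeCmp
section Stmt18Pcmp

lemma pset_outer_eq {n s pm p q : ℕ} {M : Finset (ℕ × ℕ)} (hM : IsNCMatching n M)
    (hs : (s, pm) ∈ M) (ha : (p, q) ∈ M) (hpp : pm + 1 = p) :
    Pset n M s pm = Pset n M p q := by
  have hsp := ncmem hM hs
  have hpq := ncmem hM ha
  ext c
  rw [Pset_mem, Pset_mem]
  constructor
  · rintro ⟨h2n, ⟨hbc, x, hx, hxc⟩ | hsent⟩
    · have hbx := ncmem hM hxc
      rcases mclass hM hs ha hpp hxc with hcl | hcl | hcl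
      · exact absurd hcl.1 (by omega)
      · omega
      · exact ⟨h2n, Or.inl ⟨by omega, x, by omega, hxc⟩⟩
    · exact ⟨h2n, Or.inr hsent⟩
  · rintro ⟨h2n, ⟨hbc, x, hx, hxc⟩ | hsent⟩
    · have hbx := ncmem hM hxc
      rcases mclass hM hs ha hpp hxc with hcl | hcl | hcl
      · exact absurd hcl.2 (by omega)
      · omega
      · exact ⟨h2n, Or.inl ⟨by omega, x, by omega, hxc⟩⟩
    · exact ⟨h2n, Or.inr hsent⟩

lemma pset_alpha_eq {n s pm p q : ℕ} {M : Finset (ℕ × ℕ)} (hM : IsNCMatching n M)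
    (hs : (s, pm) ∈ M) (ha : (p, q) ∈ M) (hpp : pm + 1 = p) :
    Pset n (mergeRes M s p q) s q = Pset n M p q := by
  have hsp := ncmem hM hs
  have hpq := ncmem hM ha
  ext c
  rw [Pset_mem, Pset_mem]
  constructor
  · rintro ⟨h2n, ⟨hbc, x, hx, hxc⟩ | hsent⟩
    · rcases (mem_merge' hM hs ha hpp).1 hxc with hE | ⟨h1, h2, hm2, h3, h4⟩ | ⟨hmem, hfar⟩
      · have := congrArg Prod.fst hE; omega
      · have := ncmem hM hm2; omega
      · exact ⟨h2n, Or.inl ⟨hbc, x, by omega, hmem⟩⟩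
    · exact ⟨h2n, Or.inr hsent⟩
  · rintro ⟨h2n, ⟨hbc, x, hx, hxc⟩ | hsent⟩
    · have hbx := ncmem hM hxc
      rcases mclass hM hs ha hpp hxc with hcl | hcl | hcl
      · omega
      · omega
      · refine ⟨h2n, Or.inl ⟨hbc, x, by omega, ?_⟩⟩
        exact (mem_merge' hM hs ha hpp).2 (Or.inr (Or.inr ⟨hxc, by omega⟩))
    · exact ⟨h2n, Or.inr hsent⟩

lemma pmin_outer' {n s pm p q : ℕ} {M : Finset (ℕ × ℕ)} (hM : IsNCMatching n M)
    (hs : (s, pm) ∈ M) (ha : (p, q) ∈ M) (hpp : pm + 1 = p) :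
    Pmin n (mergeRes M s p q) (s + 1) p = q := by
  have hsp := ncmem hM hs
  have hpq := ncmem hM ha
  apply Pmin_eq
  · rw [Pset_mem]
    refine ⟨by omega, Or.inl ⟨by omega, s, by omega, ?_⟩⟩
    exact (mem_merge' hM hs ha hpp).2 (Or.inl rfl)
  · intro c hc
    rw [Pset_mem] at hc
    obtain ⟨h2n, ⟨hbc, x, hx, hxc⟩ | hsent⟩ := hc
    · rcases (mem_merge' hM hs ha hpp).1 hxc with hE | ⟨h1, h2, hm2, h3, h4⟩ | ⟨hmem, hfar⟩
      · have := congrArg Prod.snd hE; omega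
      · omega
      · have hbx := ncmem hM hmem
        rcases mclass hM hs ha hpp hmem with hcl | hcl | hcl
        · omega
        · omega
        · omega
    · omega

lemma pmin_inner {n s pm p q : ℕ} {M : Finset (ℕ × ℕ)} (hM : IsNCMatching n M)
    (hs : (s, pm) ∈ M) (ha : (p, q) ∈ M) (hpp : pm + 1 = p) {e : ℕ × ℕ}
    (he : e ∈ M) (h1 : s ≤ e.1) (h2 : e.2 ≤ pm) (hne : e ≠ (s, pm)) :
    Pmin n M e.1 e.2 ≤ pm ∧
    Pmin n (mergeRes M s p q) (e.1 + 1) (e.2 + 1) = Pmin n M e.1 e.2 + 1 := by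
  have hsp := ncmem hM hs
  have hpq := ncmem hM ha
  have hbe := ncmem hM he
  have hV := vertex_unique hM he hs hne
  have hse1 : s < e.1 := by omega
  have he2pm : e.2 < pm := by omega
  have hPle : Pmin n M e.1 e.2 ≤ pm := by
    apply Finset.min'_le
    rw [Pset_mem]
    exact ⟨by omega, Or.inl ⟨by omega, s, by omega, hs⟩⟩
  refine ⟨hPle, ?_⟩
  have hPmem := Pmin_spec (n := n) (M := M) (a := e.1) (b := e.2)
  rw [Pset_mem] at hPmem
  obtain ⟨hP2n, hPcase⟩ := hPmem
  rcases hPcase with ⟨hbP, x₀, hx₀, hx₀P⟩ | hPs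
  swap
  · omega
  have hbx₀ := ncmem hM hx₀P
  set P := Pmin n M e.1 e.2 with hP
  -- the witness arc is inside the section
  have hcl : s ≤ x₀ ∧ P ≤ pm := by
    rcases mclass hM hs ha hpp hx₀P with hcl | hcl | hcl
    · exact ⟨hcl.1, hcl.2⟩
    · omega
    · omega
  apply Pmin_eq
  · rw [Pset_mem]
    refine ⟨by omega, Or.inl ⟨by omega, x₀ + 1, by omega, ?_⟩⟩
    refine (mem_merge' hM hs ha hpp).2 (Or.inr (Or.inl
      ⟨by omega, by omega, ?_, by omega, by omega⟩))
    rw [show (x₀ + 1 - 1, P + 1 - 1) = (x₀, P) from Prod.ext_iff.2 ⟨by omega, by omega⟩]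
    exact hx₀P
  · intro c hc
    rw [Pset_mem] at hc
    obtain ⟨h2n, ⟨hbc, x, hx, hxc⟩ | hsent⟩ := hc
    · rcases (mem_merge' hM hs ha hpp).1 hxc with hE | ⟨g1, g2, gm2, g3, g4⟩ | ⟨hmem, hfar⟩
      · have := congrArg Prod.snd hE; omega
      · have hq : c - 1 ∈ Pset n M e.1 e.2 := by
          rw [Pset_mem]
          have := ncmem hM gm2
          refine ⟨by omega, Or.inl ⟨by omega, x - 1, by omega, gm2⟩⟩
        have hle2 : Pmin n M e.1 e.2 ≤ c - 1 := Finset.min'_le _ _ hq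
        omega
      · have hbx := ncmem hM hmem
        omega
    · omega

lemma pset_far_eq {n s pm p q : ℕ} {M : Finset (ℕ × ℕ)} (hM : IsNCMatching n M)
    (hs : (s, pm) ∈ M) (ha : (p, q) ∈ M) (hpp : pm + 1 = p) {e : ℕ × ℕ}
    (he : e ∈ M)
    (hfar : e.2 < s ∨ q < e.1 ∨ (p < e.1 ∧ e.2 < q) ∨ (e.1 < s ∧ q < e.2)) :
    Pset n (mergeRes M s p q) e.1 e.2 = Pset n M e.1 e.2 := by
  have hsp := ncmem hM hs
  have hpq := ncmem hM ha
  have hbe := ncmem hM he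
  ext c
  rw [Pset_mem, Pset_mem]
  constructor
  · rintro ⟨h2n, ⟨hbc, x, hx, hxc⟩ | hsent⟩
    · rcases (mem_merge' hM hs ha hpp).1 hxc with hE | ⟨g1, g2, gm2, g3, g4⟩ | ⟨hmem, hfar2⟩
      · -- (x, c) = (s, q): replace by the arc (p, q)
        have hE1 := congrArg Prod.fst hE
        have hE2 := congrArg Prod.snd hE
        refine ⟨h2n, Or.inl ⟨by omega, p, by omega, ?_⟩⟩
        rw [show c = q by omega]
        exact ha
      · have := ncmem hM gm2
        omega
      · exact ⟨h2n, Or.inl ⟨hbc, x, hx, hmem⟩⟩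
    · exact ⟨h2n, Or.inr hsent⟩
  · rintro ⟨h2n, ⟨hbc, x, hx, hxc⟩ | hsent⟩
    · have hbx := ncmem hM hxc
      rcases mclass hM hs ha hpp hxc with hcl | hcl | hcl
      · omega
      · -- (x, c) = (p, q): replace by the arc (s, q) of M'
        refine ⟨h2n, Or.inl ⟨by omega, s, by omega, ?_⟩⟩
        rw [show c = q by omega]
        exact (mem_merge' hM hs ha hpp).2 (Or.inl rfl)
      · refine ⟨h2n, Or.inl ⟨hbc, x, hx, ?_⟩⟩
        exact (mem_merge' hM hs ha hpp).2 (Or.inr (Or.inr ⟨hxc, hcl⟩))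
    · exact ⟨h2n, Or.inr hsent⟩

lemma pmin_far_pos {n s pm p q : ℕ} {M : Finset (ℕ × ℕ)} (hM : IsNCMatching n M)
    (hs : (s, pm) ∈ M) (ha : (p, q) ∈ M) (hpp : pm + 1 = p) {e : ℕ × ℕ}
    (he : e ∈ M)
    (hfar : e.2 < s ∨ q < e.1 ∨ (p < e.1 ∧ e.2 < q) ∨ (e.1 < s ∧ q < e.2)) :
    Pmin n M e.1 e.2 ≤ s ∨ p + 1 ≤ Pmin n M e.1 e.2 := by
  have hsp := ncmem hM hs
  have hpq := ncmem hM ha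
  have hbe := ncmem hM he
  have hPmem := Pmin_spec (n := n) (M := M) (a := e.1) (b := e.2)
  rw [Pset_mem] at hPmem
  obtain ⟨hP2n, hPcase⟩ := hPmem
  rcases hPcase with ⟨hbP, x₀, hx₀, hx₀P⟩ | hPs
  · have hbx₀ := ncmem hM hx₀P
    rcases mclass hM hs ha hpp hx₀P with hcl | hcl | hcl
    · -- witness inside the section: P ≤ pm; only possible when e is before s
      omega
    · omega
    · omega
  · omega

end Stmt18Pcmp
section Stmt18Img

lemma Pmin_congr {n n' a b a' b' : ℕ} {M M' : Finset (ℕ × ℕ)}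
    (h : Pset n M a b = Pset n' M' a' b') : Pmin n M a b = Pmin n' M' a' b' := by
  apply Pmin_eq
  · rw [h]; exact Pmin_spec
  · intro c hc
    rw [h] at hc
    exact Finset.min'_le _ _ hc

lemma arcDiag_far {n s pm p q : ℕ} {M : Finset (ℕ × ℕ)} (hM : IsNCMatching n M)
    (hs : (s, pm) ∈ M) (ha : (p, q) ∈ M) (hpp : pm + 1 = p) {e : ℕ × ℕ}
    (he : e ∈ M)
    (hfar : e.2 < s ∨ q < e.1 ∨ (p < e.1 ∧ e.2 < q) ∨ (e.1 < s ∧ q < e.2)) :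
    arcDiag n (mergeRes M s p q) e = arcDiag n M e := by
  have hsp := ncmem hM hs
  have hpq := ncmem hM ha
  have hbe := ncmem hM he
  have hPeq : Pmin n (mergeRes M s p q) e.1 e.2 = Pmin n M e.1 e.2 :=
    Pmin_congr (pset_far_eq hM hs ha hpp he hfar)
  have hfst : zerosBeforeN (matchOutdeg (mergeRes M s p q)) e.1
      = zerosBeforeN (matchOutdeg M) e.1 := by
    rcases hfar with h | h | h | h
    · exact merge_zb_le hM hs ha hpp (by omega)
    · exact merge_zb_ge hM hs ha hpp (by omega)
    · exact merge_zb_ge hM hs ha hpp (by omega)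
    · exact merge_zb_le hM hs ha hpp (by omega)
  have hsnd : zerosBeforeN (matchOutdeg (mergeRes M s p q)) (Pmin n M e.1 e.2)
      = zerosBeforeN (matchOutdeg M) (Pmin n M e.1 e.2) := by
    rcases pmin_far_pos hM hs ha hpp he hfar with h | h
    · exact merge_zb_le hM hs ha hpp h
    · exact merge_zb_ge hM hs ha hpp h
  simp only [arcDiag]
  rw [hPeq, hfst, hsnd]

lemma arcDiag_inner {n s pm p q : ℕ} {M : Finset (ℕ × ℕ)} (hM : IsNCMatching n M)
    (hs : (s, pm) ∈ M) (ha : (p, q) ∈ M) (hpp : pm + 1 = p) {e : ℕ × ℕ}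
    (he : e ∈ M) (h1 : s ≤ e.1) (h2 : e.2 ≤ pm) (hne : e ≠ (s, pm)) :
    arcDiag n (mergeRes M s p q) (e.1 + 1, e.2 + 1) = arcDiag n M e := by
  have hsp := ncmem hM hs
  have hpq := ncmem hM ha
  have hbe := ncmem hM he
  have hV := vertex_unique hM he hs hne
  obtain ⟨hPle, hPeq⟩ := pmin_inner hM hs ha hpp he h1 h2 hne
  have hPmem := Pmin_spec (n := n) (M := M) (a := e.1) (b := e.2)
  rw [Pset_mem] at hPmem
  simp only [arcDiag]
  rw [hPeq]
  have hf1 : zerosBeforeN (matchOutdeg (mergeRes M s p q)) (e.1 + 1)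
      = zerosBeforeN (matchOutdeg M) e.1 := by
    have hx := merge_zb_mid hM hs ha hpp (m := e.1 + 1) (by omega) (by omega)
    rw [show e.1 + 1 - 1 = e.1 from rfl] at hx
    exact hx
  have hf2 : zerosBeforeN (matchOutdeg (mergeRes M s p q)) (Pmin n M e.1 e.2 + 1)
      = zerosBeforeN (matchOutdeg M) (Pmin n M e.1 e.2) := by
    have hx := merge_zb_mid hM hs ha hpp (m := Pmin n M e.1 e.2 + 1)
      (by omega) (by omega)
    rw [show Pmin n M e.1 e.2 + 1 - 1 = Pmin n M e.1 e.2 from rfl] at hx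
    exact hx
  rw [hf1, hf2]

lemma arcDiag_alpha' {n s pm p q : ℕ} {M : Finset (ℕ × ℕ)} (hM : IsNCMatching n M)
    (hs : (s, pm) ∈ M) (ha : (p, q) ∈ M) (hpp : pm + 1 = p) :
    arcDiag n (mergeRes M s p q) (s, q)
      = (zerosBeforeN (matchOutdeg M) s,
         zerosBeforeN (matchOutdeg M) (Pmin n M p q) + 1) := by
  have hsp := ncmem hM hs
  have hpq := ncmem hM ha
  have hPeq : Pmin n (mergeRes M s p q) s q = Pmin n M p q :=
    Pmin_congr (pset_alpha_eq hM hs ha hpp)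
  have hPge : p + 1 ≤ Pmin n M p q := by
    have := Pmin_spec (n := n) (M := M) (a := p) (b := q)
    rw [Pset_mem] at this
    rcases this.2 with ⟨h, _⟩ | h <;> omega
  simp only [arcDiag]
  rw [hPeq, merge_zb_le hM hs ha hpp (le_refl s), merge_zb_ge hM hs ha hpp hPge]

lemma arcDiag_outer_orig {n s pm p q : ℕ} {M : Finset (ℕ × ℕ)} (hM : IsNCMatching n M)
    (hs : (s, pm) ∈ M) (ha : (p, q) ∈ M) (hpp : pm + 1 = p) :
    arcDiag n M (s, pm)
      = (zerosBeforeN (matchOutdeg M) s,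
         zerosBeforeN (matchOutdeg M) (Pmin n M p q) + 1) := by
  simp only [arcDiag]
  rw [Pmin_congr (pset_outer_eq hM hs ha hpp)]

lemma arcDiag_outer' {n s pm p q : ℕ} {M : Finset (ℕ × ℕ)} (hM : IsNCMatching n M)
    (hs : (s, pm) ∈ M) (ha : (p, q) ∈ M) (hpp : pm + 1 = p) :
    arcDiag n (mergeRes M s p q) (s + 1, p)
      = (zerosBeforeN (matchOutdeg M) s, zerosBeforeN (matchOutdeg M) q + 1) := by
  have hsp := ncmem hM hs
  have hpq := ncmem hM ha
  simp only [arcDiag]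
  rw [pmin_outer' hM hs ha hpp,
    merge_zb_mid hM hs ha hpp (m := s + 1) (by omega) (by omega),
    merge_zb_ge hM hs ha hpp (m := q) (by omega),
    show s + 1 - 1 = s from rfl]

/-- basic position facts for the exchanged diagonals -/
lemma merge_facts {n s pm p q : ℕ} {M : Finset (ℕ × ℕ)} (hM : IsNCMatching n M)
    (hs : (s, pm) ∈ M) (ha : (p, q) ∈ M) (hpp : pm + 1 = p) :
    zerosBeforeN (matchOutdeg M) s < zerosBeforeN (matchOutdeg M) p ∧
    zerosBeforeN (matchOutdeg M) p ≤ zerosBeforeN (matchOutdeg M) q ∧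
    zerosBeforeN (matchOutdeg M) q + 2 ≤ zerosBeforeN (matchOutdeg M) (Pmin n M p q) + 1 ∧
    zerosBeforeN (matchOutdeg M) q + 1 ≤ n ∧
    zerosBeforeN (matchOutdeg M) (Pmin n M p q) + 1 ≤ n + 1 := by
  have hsp := ncmem hM hs
  have hpq := ncmem hM ha
  have h1 : zerosBeforeN (matchOutdeg M) p = zerosBeforeN (matchOutdeg M) pm + 1 := by
    have h0 := zb_succ (matchOutdeg M) pm
    rw [if_pos (right_zero hM hs), hpp] at h0
    omega
  have h2 := zb_mono (matchOutdeg M) (by omega : s ≤ pm)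
  have h3 := zb_mono (matchOutdeg M) (by omega : p ≤ q)
  have hPge : q + 1 ≤ Pmin n M p q ∧ Pmin n M p q ≤ 2 * n := by
    have := Pmin_spec (n := n) (M := M) (a := p) (b := q)
    rw [Pset_mem] at this
    rcases this.2 with ⟨h, _⟩ | h <;> omega
  have h4 : zerosBeforeN (matchOutdeg M) (q + 1)
      = zerosBeforeN (matchOutdeg M) q + 1 := by
    have h5 := zb_succ (matchOutdeg M) q
    rw [if_pos (right_zero hM ha)] at h5
    exact h5
  have h6 := zb_mono (matchOutdeg M) hPge.1
  have h7 := zb_mono (matchOutdeg M) (by omega : q + 1 ≤ 2 * n)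
  have h8 := zb_mono (matchOutdeg M) hPge.2
  have h9 := zb_total hM
  exact ⟨by omega, h3, by omega, by omega, by omega⟩

end Stmt18Img
section Stmt18Final

lemma merge_image {n s pm p q : ℕ} {M : Finset (ℕ × ℕ)} (hM : IsNCMatching n M)
    (hs : (s, pm) ∈ M) (ha : (p, q) ∈ M) (hpp : pm + 1 = p)
    (hinj : Set.InjOn (arcDiag n M) ↑M) :
    (mergeRes M s p q).image (arcDiag n (mergeRes M s p q))
      = insert (zerosBeforeN (matchOutdeg M) s, zerosBeforeN (matchOutdeg M) q + 1)
          ((M.image (arcDiag n M)).erase (arcDiag n M (p, q))) := by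
  have hsp := ncmem hM hs
  have hpq := ncmem hM ha
  obtain ⟨hf1, hf2, hf3, hf4, hf5⟩ := merge_facts hM hs ha hpp
  have hαval : arcDiag n M (p, q)
      = (zerosBeforeN (matchOutdeg M) p,
         zerosBeforeN (matchOutdeg M) (Pmin n M p q) + 1) := rfl
  ext x
  simp only [Finset.mem_insert, Finset.mem_erase]
  constructor
  · intro hx
    obtain ⟨e', he', rfl⟩ := Finset.mem_image.1 hx
    rw [mergeRes_eq] at he'
    obtain ⟨e, he, rfl⟩ := Finset.mem_image.1 he'
    have hbe := ncmem hM he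
    rcases fshape hM hs ha hpp he with ⟨h1, h2, h3, hfe⟩ | ⟨h1, h2, hfe⟩ | ⟨h1, hfe⟩
    · by_cases hE : e = (s, pm)
      · left
        rw [hfe, hE]
        rw [show ((s, pm).1 + 1, (s, pm).2 + 1) = (s + 1, p) from
          Prod.ext_iff.2 ⟨rfl, by omega⟩]
        exact arcDiag_outer' hM hs ha hpp
      · right
        rw [hfe, arcDiag_inner hM hs ha hpp he h1 h3 hE]
        refine ⟨?_, Finset.mem_image.2 ⟨e, he, rfl⟩⟩
        intro hcon
        have := hinj (Finset.mem_coe.2 he) (Finset.mem_coe.2 ha) hcon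
        rw [this] at h3
        omega
    · right
      rw [hfe, arcDiag_alpha' hM hs ha hpp]
      refine ⟨?_, ?_⟩
      · rw [hαval]
        intro hcon
        have := congrArg Prod.fst hcon
        omega
      · rw [← arcDiag_outer_orig hM hs ha hpp]
        exact Finset.mem_image.2 ⟨(s, pm), hs, rfl⟩
    · right
      rw [hfe, arcDiag_far hM hs ha hpp he h1.2]
      refine ⟨?_, Finset.mem_image.2 ⟨e, he, rfl⟩⟩
      intro hcon
      have heq := hinj (Finset.mem_coe.2 he) (Finset.mem_coe.2 ha) hcon
      rw [heq] at h1
      omega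
  · rintro (rfl | ⟨hxG, hxmem⟩)
    · -- x = g : image of the shifted outer arc
      have hmem' : (s + 1, p) ∈ mergeRes M s p q := by
        rw [mergeRes_eq]
        refine Finset.mem_image.2 ⟨(s, pm), hs, ?_⟩
        unfold mmap
        rw [if_pos ⟨le_refl _, by omega⟩]
        exact Prod.ext_iff.2 ⟨rfl, by omega⟩
      refine Finset.mem_image.2 ⟨(s + 1, p), hmem', ?_⟩
      exact arcDiag_outer' hM hs ha hpp
    · obtain ⟨e, he, rfl⟩ := Finset.mem_image.1 hxmem
      have hbe := ncmem hM he
      rcases fshape hM hs ha hpp he with ⟨h1, h2, h3, hfe⟩ | ⟨h1, h2, hfe⟩ | ⟨h1, hfe⟩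
      · by_cases hE : e = (s, pm)
        · -- arcDiag n M (s, pm) is the image of the new long arc (s, q)
          have hm2 : (s, q) ∈ mergeRes M s p q :=
            (mem_merge' hM hs ha hpp).2 (Or.inl rfl)
          refine Finset.mem_image.2 ⟨(s, q), hm2, ?_⟩
          rw [hE, arcDiag_outer_orig hM hs ha hpp]
          exact arcDiag_alpha' hM hs ha hpp
        · have hm2 : (e.1 + 1, e.2 + 1) ∈ mergeRes M s p q := by
            rw [mergeRes_eq]
            refine Finset.mem_image.2 ⟨e, he, hfe⟩
          exact Finset.mem_image.2 ⟨(e.1 + 1, e.2 + 1), hm2,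
            arcDiag_inner hM hs ha hpp he h1 h3 hE⟩
      · exfalso
        apply hxG
        rw [show e = (p, q) from Prod.ext_iff.2 ⟨h1, h2⟩]
      · have hm2 : e ∈ mergeRes M s p q := by
          rw [mergeRes_eq]
          refine Finset.mem_image.2 ⟨e, he, hfe⟩
        exact Finset.mem_image.2 ⟨e, hm2, arcDiag_far hM hs ha hpp he h1.2⟩

lemma merge_mtf {n s pm p q : ℕ} {M : Finset (ℕ × ℕ)} (hM : IsNCMatching n M)
    (hs : (s, pm) ∈ M) (ha : (p, q) ∈ M) (hpp : pm + 1 = p) :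
    MatchTriFlip n M (mergeRes M s p q) := by
  intro T T' hT hT' hd hd'
  have hsp := ncmem hM hs
  have hpq := ncmem hM ha
  have hne : (s, pm) ≠ (p, q) := by
    intro h; have := congrArg Prod.fst h; omega
  have hn2 : 2 ≤ n := by
    have h2 := Finset.one_lt_card.2 ⟨(s, pm), hs, (p, q), ha, hne⟩
    rw [hM.2.2.2] at h2
    omega
  have hΨ := phi n (by omega) M T hM hT hd
  have hΨ' := phi n (by omega) (mergeRes M s p q) T'
    (merge_nc hM hs ha hpp) hT' hd'
  have hL : (0, n + 1) ∉ T := fun h => (hT.1 _ h).2.2 ⟨rfl, rfl⟩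
  have hL' : (0, n + 1) ∉ T' := fun h => (hT'.1 _ h).2.2 ⟨rfl, rfl⟩
  have hcard : (M.image (arcDiag n M)).card = M.card := by
    rw [← hΨ, Finset.card_insert_of_notMem hL, hT.2.2, hM.2.2.2]
    omega
  have hinj := Finset.injOn_of_card_image_eq hcard
  have himg := merge_image hM hs ha hpp hinj
  obtain ⟨hf1, hf2, hf3, hf4, hf5⟩ := merge_facts hM hs ha hpp
  set g : ℕ × ℕ := (zerosBeforeN (matchOutdeg M) s,
    zerosBeforeN (matchOutdeg M) q + 1) with hg
  set G : ℕ × ℕ := arcDiag n M (p, q) with hG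
  have hGval : G = (zerosBeforeN (matchOutdeg M) p,
      zerosBeforeN (matchOutdeg M) (Pmin n M p q) + 1) := rfl
  have hGmem : G ∈ M.image (arcDiag n M) := Finset.mem_image.2 ⟨(p, q), ha, rfl⟩
  have hGnL : G ≠ (0, n + 1) := by
    intro h
    have := congrArg Prod.fst h
    rw [hGval] at this
    omega
  have hgnL : g ≠ (0, n + 1) := by
    intro h
    have := congrArg Prod.snd h
    rw [hg] at this
    omega
  have hgG : Crosses g G := by
    rw [hg, hGval]
    unfold Crosses
    omega
  have hGT : G ∈ T := by
    have h2 : G ∈ insert (0, n + 1) T := hΨ ▸ hGmem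
    rcases Finset.mem_insert.1 h2 with h | h
    · exact absurd h hGnL
    · exact h
  have hgnotin : g ∉ M.image (arcDiag n M) := by
    intro hin
    have h2 : g ∈ insert (0, n + 1) T := hΨ ▸ hin
    have hgT : g ∈ T := by
      rcases Finset.mem_insert.1 h2 with h | h
      · exact absurd h hgnL
      · exact h
    exact hT.2.1 g hgT G hGT hgG
  have hgG' : g ≠ G := fun h => hgnotin (h ▸ hGmem)
  have hTeq : T = (M.image (arcDiag n M)).erase (0, n + 1) := by
    rw [← hΨ, Finset.erase_insert hL]
  have hT'eq : T' = (insert g ((M.image (arcDiag n M)).erase G)).erase (0, n + 1) := by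
    rw [← himg, ← hΨ', Finset.erase_insert hL']
  have hTd : T \ T' = {G} := by
    rw [hTeq, hT'eq]
    ext x
    simp only [Finset.mem_sdiff, Finset.mem_erase, Finset.mem_insert,
      Finset.mem_singleton]
    constructor
    · rintro ⟨⟨hxL, hxmem⟩, hnot⟩
      by_contra hxG
      exact hnot ⟨hxL, Or.inr ⟨hxG, hxmem⟩⟩
    · rintro rfl
      refine ⟨⟨hGnL, hGmem⟩, ?_⟩
      rintro ⟨-, (h | ⟨h, -⟩)⟩
      · exact hgG' h.symm
      · exact h rfl
  have hT'd : T' \ T = {g} := by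
    rw [hTeq, hT'eq]
    ext x
    simp only [Finset.mem_sdiff, Finset.mem_erase, Finset.mem_insert,
      Finset.mem_singleton]
    constructor
    · rintro ⟨⟨hxL, (rfl | ⟨hxG, hxmem⟩)⟩, hnot⟩
      · rfl
      · exact absurd ⟨hxL, hxmem⟩ hnot
    · rintro rfl
      exact ⟨⟨hgnL, Or.inl rfl⟩, fun hx => hgnotin hx.2⟩
  exact ⟨hT, hT', by rw [hTd, Finset.card_singleton],
    by rw [hT'd, Finset.card_singleton]⟩

lemma mtf_symm {n : ℕ} {A B : Finset (ℕ × ℕ)} (h : MatchTriFlip n A B) :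
    MatchTriFlip n B A := by
  intro T T' hT hT' hd hd'
  obtain ⟨h1, h2, h3, h4⟩ := h T' T hT' hT hd' hd
  exact ⟨hT, hT', h4, h3⟩

end Stmt18Final

/-- In the single row presentation of a plane perfect matching,
every arc `α = (p, q)` with `p ≥ 1` (0-indexed, i.e. not starting at the first
vertex) determines exactly one of the two operations — a merge (if `p-1` is the
ending vertex of a section, i.e. of an arc) or a split (if `p-1` is the
starting vertex of an arc); merge and split are mutually inverse, and each
yields a matching and corresponds to exactly one diagonal-flip of the
associated triangulation. -/
theorem stmt18 (n p q : ℕ) (M : Finset (ℕ × ℕ))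
    (hM : IsNCMatching n M) (hmem : (p, q) ∈ M) (hp : 1 ≤ p) :
    Xor' (∃ s, (s, p - 1) ∈ M) (∃ t, (p - 1, t) ∈ M) ∧
    (∀ s, (s, p - 1) ∈ M →
      IsNCMatching n (mergeRes M s p q) ∧
      splitRes (mergeRes M s p q) (s + 1) p q = M ∧
      MatchTriFlip n M (mergeRes M s p q)) ∧
    (∀ t, (p - 1, t) ∈ M →
      IsNCMatching n (splitRes M p q t) ∧
      mergeRes (splitRes M p q t) (p - 1) q t = M ∧
      MatchTriFlip n M (splitRes M p q t)) := by
  have hppg : p - 1 + 1 = p := by omega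
  have hpq := ncmem hM hmem
  refine ⟨xor_part hM hmem, ?_, ?_⟩
  · intro s hsm
    exact ⟨merge_nc hM hsm hmem hppg, merge_split_inv hM hsm hmem hppg,
      merge_mtf hM hsm hmem hppg⟩
  · intro t htm
    have hNC := split_nc hM htm hmem hppg
    have hinv := split_merge_inv hM htm hmem hppg
    refine ⟨hNC, hinv, ?_⟩
    have h1 : (p - 1, q - 1) ∈ splitRes M p q t := by
      rw [splitRes_eq]
      refine Finset.mem_image.2 ⟨(p, q), hmem, ?_⟩
      unfold smap
      rw [if_pos ⟨le_refl _, le_refl _⟩]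
    have h2 : (q, t) ∈ splitRes M p q t := by
      rw [splitRes_eq]
      refine Finset.mem_image.2 ⟨(p - 1, t), htm, ?_⟩
      unfold smap
      rw [if_neg (by omega), if_pos rfl]
    have hq1 : q - 1 + 1 = q := by omega
    have hmtf := merge_mtf hNC h1 h2 hq1
    rw [hinv] at hmtf
    exact mtf_symm hmtf
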